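/- arXiv:0812.2300 — 7 statements merged into one kernel-verified Lean document; each statement's English description precedes it below -/
import Mathlib

section
/- Let Q be a well-founded poset. Then there is no map embedding Ω̲(ω*) into I_{<ω}(Q) as a join-subsemilattice. In particular (taking Q = ℕ with the discrete/antichain order), Ω̲(ω*) does not embed into [ω]^{<ω} as a join-subsemilattice. -/
open Set

/-- The poset `Ω(ω*)`: pairs `(i,j)` of naturals with `i < j`,
ordered by `(i,j) ≤ (i',j')` iff `i' ≤ i ∧ j ≤ j'`. We only need the carrier and the join. -/
abbrev OmegaStar : Type := {p : ℕ × ℕ // p.1 < p.2}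

/-- The join in `Ω(ω*)`: `(i,j) ⊔ (i',j') = (min i i', max j j')`. -/
def omegaJoin (a b : OmegaStar) : OmegaStar :=
  ⟨(min a.1.1 b.1.1, max a.1.2 b.1.2),
    lt_of_le_of_lt (min_le_left _ _) (lt_of_lt_of_le a.2 (le_max_left _ _))⟩

/-- `Ω̲(ω*)`: `Ω(ω*)` with a new least element (`none`) adjoined. -/
abbrev OmegaStarBot : Type := Option OmegaStar

/-- The join in `Ω̲(ω*)`. -/
def omegaBotJoin : OmegaStarBot → OmegaStarBot → OmegaStarBot
  | none, b => b
  | a, none => a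
  | some a, some b => some (omegaJoin a b)

/-- `I_{<ω}(Q)`: the finitely generated initial segments of `Q`,
i.e. downward closures of finite subsets of `Q` (including `∅`). -/
def FinGenInit (Q : Type*) [Preorder Q] : Set (Set Q) :=
  {S | ∃ F : Finset Q, S = {x | ∃ y ∈ F, x ≤ y}}

/-- An ideal of a poset: a nonempty, up-directed, downward closed subset. -/
def IsIdeal {P : Type*} [Preorder P] (I : Set P) : Prop :=
  I.Nonempty ∧ (∀ x ∈ I, ∀ y ∈ I, ∃ z ∈ I, x ≤ z ∧ y ≤ z) ∧
    ∀ x y : P, x ≤ y → y ∈ I → x ∈ I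

/-- A completely meet-irreducible ideal: an ideal `I` for which there is an ideal `J ⊋ I`
contained in every ideal strictly containing `I`. -/
def CMIdeal {P : Type*} [Preorder P] (I : Set P) : Prop :=
  IsIdeal I ∧ ∃ J : Set P, IsIdeal J ∧ I ⊂ J ∧ ∀ K : Set P, IsIdeal K → I ⊂ K → J ⊆ K

/-- An ideal of a sub-poset `P` of `α`: a subset of `P`, nonempty, up-directed,
downward closed within `P`. -/
def IsIdealIn {α : Type*} [Preorder α] (P I : Set α) : Prop :=
  I ⊆ P ∧ I.Nonempty ∧ (∀ x ∈ I, ∀ y ∈ I, ∃ z ∈ I, x ≤ z ∧ y ≤ z) ∧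
    ∀ x ∈ P, ∀ y ∈ I, x ≤ y → x ∈ I

/-- A completely meet-irreducible ideal of the sub-poset `P`. -/
def CMIdealIn {α : Type*} [Preorder α] (P I : Set α) : Prop :=
  IsIdealIn P I ∧ ∃ J : Set α, IsIdealIn P J ∧ I ⊂ J ∧
    ∀ K : Set α, IsIdealIn P K → I ⊂ K → J ⊆ K

/-- `{x} ∨ J`, the ideal `{z : z ≤ x ⊔ y for some y ∈ J}`. -/
def JoinUp {P : Type*} [SemilatticeSup P] (x : P) (J : Set P) : Set P :=
  {z | ∃ y ∈ J, z ≤ x ⊔ y}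

/-- A nonempty chain `𝓘` of ideals is separating if for every `I ∈ 𝓘` with `I ≠ ⋃𝓘` and every
`x ∈ ⋃𝓘 \ I` there is `J ∈ 𝓘` with `I ⊄ {x} ∨ J`. -/
def Separating {P : Type*} [SemilatticeSup P] (𝓘 : Set (Set P)) : Prop :=
  ∀ I ∈ 𝓘, I ≠ ⋃₀ 𝓘 → ∀ x ∈ (⋃₀ 𝓘) \ I, ∃ J ∈ 𝓘, ¬ I ⊆ JoinUp x J

/-- An independent subset of a join-semilattice: no member is below the join of finitely many
of the others. -/
def IndepSet {P : Type*} [SemilatticeSup P] (X : Set P) : Prop :=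
  ∀ x ∈ X, ∀ F : Finset P, ∀ hF : F.Nonempty, ↑F ⊆ X \ {x} → ¬ x ≤ F.sup' hF id

/-- `ℱ^{<ω}`: unions of finite subfamilies of `ℱ` (including `∅`). -/
def finUnions {α : Type*} (ℱ : Set (Set α)) : Set (Set α) :=
  {S | ∃ G : Finset (Set α), ↑G ⊆ ℱ ∧ S = ⋃₀ ↑G}

/-- `ℱ^∪`: unions of arbitrary subfamilies of `ℱ`. -/
def arbUnions {α : Type*} (ℱ : Set (Set α)) : Set (Set α) :=
  {S | ∃ G ⊆ ℱ, S = ⋃₀ G}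

/-!
Let `D n` be the image of the interval `[n, n]`. Join preservation gives `D k ⊆ D i ∪ D m` for
`i ≤ k ≤ m`, and injectivity gives `D (k + 1) ∪ D m ≠ D k ∪ D m` for `k < m`. As `D k` has finitely
many generators, some `x ∈ D k \ D (k + 1)` lies outside infinitely many `D m`; and an element
outside infinitely many `D m` that lies in `D (n + 1)` also lies in `D n`. So the generators of
`D n` that lie outside infinitely many `D m` span a strictly decreasing sequence of finitely
generated lower sets, which cannot exist in a well-founded poset: their maximal generators would
descend in the Dershowitz–Manna order on multisets.
-/

section LowerClosure

variable {α : Type*} [PartialOrder α]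

theorem Set.Finite.exists_isAntichain_lowerClosure_eq {s : Set α} (hs : s.Finite) :
    ∃ t ⊆ s, IsAntichain (· ≤ ·) t ∧ lowerClosure t = lowerClosure s := by
  refine ⟨{x | Maximal (· ∈ s) x}, fun x hx => hx.prop, setOfPred_maximal_antichain _,
    le_antisymm (lowerClosure_mono fun x hx => hx.prop) (lowerClosure_le.2 fun a ha => ?_)⟩
  obtain ⟨b, hab, hb⟩ := hs.exists_le_maximal ha
  exact mem_lowerClosure.2 ⟨b, hb, hab⟩

theorem isDershowitzMannaLT_of_lowerClosure_lt {s t : Finset α}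
    (hs : IsAntichain (· ≤ ·) (s : Set α))
    (hst : lowerClosure (s : Set α) < lowerClosure (t : Set α)) :
    Multiset.IsDershowitzMannaLT s.val t.val := by
  classical
  refine ⟨(s ∩ t).val, (s \ t).val, (t \ s).val, ?_, ?_, ?_, ?_⟩
  · intro h
    have hts : t ⊆ s := Finset.sdiff_eq_empty_iff_subset.1 (Finset.val_eq_zero.1 h)
    exact hst.not_ge (lowerClosure_mono (by exact_mod_cast hts))
  · rw [Finset.inter_val, Finset.sdiff_val, add_comm, Multiset.sub_add_inter]
  · rw [Finset.inter_comm, Finset.inter_val, Finset.sdiff_val, add_comm, Multiset.sub_add_inter]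
  · intro y hy
    obtain ⟨hys, hyt⟩ := Finset.mem_sdiff.1 hy
    obtain ⟨z, hzt, hyz⟩ := mem_lowerClosure.1 (hst.le (subset_lowerClosure hys))
    have hyz_ne : y ≠ z := fun h => hyt (h ▸ hzt)
    exact ⟨z, Finset.mem_sdiff.2 ⟨hzt, fun hzs => hs hys hzs hyz_ne hyz⟩, hyz.lt_of_ne hyz_ne⟩

theorem not_strictAnti_lowerClosure [WellFoundedLT α] {s : ℕ → Set α} (hs : ∀ n, (s n).Finite) :
    ¬ StrictAnti (fun n => lowerClosure (s n)) := by
  intro hanti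
  choose t hts ht hst using fun n => (hs n).exists_isAntichain_lowerClosure_eq
  have htfin : ∀ n, (t n).Finite := fun n => (hs n).subset (hts n)
  have hdesc : ∀ n,
      Multiset.IsDershowitzMannaLT (htfin (n + 1)).toFinset.val (htfin n).toFinset.val := by
    intro n
    apply isDershowitzMannaLT_of_lowerClosure_lt
    · simpa using ht (n + 1)
    · simpa [hst] using hanti n.lt_succ_self
  exact (wellFounded_iff_isEmpty_descending_chain.1
    Multiset.wellFounded_isDershowitzMannaLT).elim ⟨fun n => (htfin n).toFinset.val, hdesc⟩

end LowerClosure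

section IntervalSequence

open Filter

variable {α : Type*} {D : ℕ → Set α}

theorem mem_of_mem_succ_of_frequently_notMem
    (hconvex : ∀ ⦃i k m⦄, i ≤ k → k ≤ m → D k ⊆ D i ∪ D m) {x : α} {n : ℕ}
    (hx : ∃ᶠ m in atTop, x ∉ D m) (hxn : x ∈ D (n + 1)) : x ∈ D n := by
  obtain ⟨m, hm, hxm⟩ := frequently_atTop.1 hx (n + 1)
  exact (hconvex n.le_succ hm hxn).resolve_right hxm

variable [PartialOrder α]

theorem exists_mem_notMem_succ_frequently_notMem
    (hD : ∀ n, ∃ s : Set α, s.Finite ∧ D n = lowerClosure s)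
    (hconvex : ∀ ⦃i k m⦄, i ≤ k → k ≤ m → D k ⊆ D i ∪ D m)
    (hsep : ∀ ⦃k m⦄, k < m → D (k + 1) ∪ D m ≠ D k ∪ D m) (k : ℕ) :
    ∃ x ∈ D k, x ∉ D (k + 1) ∧ ∃ᶠ m in atTop, x ∉ D m := by
  by_contra! hstay
  obtain ⟨s, hs, hDk⟩ := hD k
  have hlower : ∀ n, IsLowerSet (D n) := fun n => by
    obtain ⟨t, -, hDn⟩ := hD n
    exact hDn ▸ (lowerClosure t).lower
  have hgen : ∀ᶠ m in atTop, ∀ g ∈ s \ D (k + 1), g ∈ D m :=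
    hs.sdiff.eventually_all.2 fun g hg => hstay g (hDk ▸ subset_lowerClosure hg.1) hg.2
  obtain ⟨m, hm, hgm⟩ := ((eventually_gt_atTop k).and hgen).exists
  refine hsep hm (Subset.antisymm (union_subset (hconvex k.le_succ hm) subset_union_right) ?_)
  refine union_subset (fun x hx => ?_) subset_union_right
  rw [hDk] at hx
  obtain ⟨g, hgs, hxg⟩ := mem_lowerClosure.1 hx
  by_cases hg : g ∈ D (k + 1)
  · exact Or.inl (hlower _ hxg hg)
  · exact Or.inr (hlower _ hxg (hgm g ⟨hgs, hg⟩))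

theorem exists_lt_union_succ_eq_union [WellFoundedLT α]
    (hD : ∀ n, ∃ s : Set α, s.Finite ∧ D n = lowerClosure s)
    (hconvex : ∀ ⦃i k m⦄, i ≤ k → k ≤ m → D k ⊆ D i ∪ D m) :
    ∃ k m, k < m ∧ D (k + 1) ∪ D m = D k ∪ D m := by
  by_contra! hsep
  choose s hs hDs using hD
  choose x hxD hxsucc hxfreq using
    exists_mem_notMem_succ_frequently_notMem (fun n => ⟨s n, hs n, hDs n⟩) hconvex hsep
  set E : ℕ → Set α := fun n => {g ∈ s n | ∃ᶠ m in atTop, g ∉ D m}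
  have hE_sub : ∀ n, ↑(lowerClosure (E n)) ⊆ D n := fun n => by
    rw [hDs n]
    exact lowerClosure_mono (sep_subset _ _)
  have hsub_E : ∀ n x, x ∈ D n → (∃ᶠ m in atTop, x ∉ D m) → x ∈ lowerClosure (E n) := by
    intro n x hx hxf
    rw [hDs n] at hx
    obtain ⟨g, hgs, hxg⟩ := mem_lowerClosure.1 hx
    refine mem_lowerClosure.2 ⟨g, ⟨hgs, hxf.mono fun m hxm hgm => hxm ?_⟩, hxg⟩
    exact (hDs m ▸ (lowerClosure (s m)).lower) hxg hgm
  refine not_strictAnti_lowerClosure (s := E) (fun n => (hs n).subset (sep_subset _ _))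
    (strictAnti_nat_of_succ_lt fun n => lt_of_le_not_ge ?_ fun hle => hxsucc n ?_)
  · refine lowerClosure_le.2 fun g hg => hsub_E n g ?_ hg.2
    exact mem_of_mem_succ_of_frequently_notMem hconvex hg.2 (hE_sub _ (subset_lowerClosure hg))
  · exact hE_sub _ (hle (hsub_E n _ (hxD n) (hxfreq n)))

end IntervalSequence

theorem mem_finGenInit_iff {Q : Type*} [Preorder Q] {S : Set Q} :
    S ∈ FinGenInit Q ↔ ∃ s : Set Q, s.Finite ∧ S = lowerClosure s := by
  constructor
  · rintro ⟨F, rfl⟩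
    exact ⟨F, F.finite_toSet, by ext; simp [mem_lowerClosure]⟩
  · rintro ⟨s, hs, rfl⟩
    exact ⟨hs.toFinset, by ext; simp [mem_lowerClosure]⟩

/-- The interval `[i, m]` of `Ω(ω*)`; `min`/`max` make it total in `i` and `m`. -/
def omegaIcc (i m : ℕ) : OmegaStarBot :=
  some ⟨(min i m, max i m + 1), by omega⟩

theorem omegaBotJoin_omegaIcc_self (i m : ℕ) :
    omegaBotJoin (omegaIcc i i) (omegaIcc m m) = omegaIcc i m := by
  simp only [omegaIcc, omegaBotJoin, omegaJoin, Option.some.injEq, Subtype.mk.injEq,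
    Prod.mk.injEq]
  omega

theorem omegaBotJoin_omegaIcc_of_le_of_le {i k m : ℕ} (hik : i ≤ k) (hkm : k ≤ m) :
    omegaBotJoin (omegaIcc k k) (omegaIcc i m) = omegaIcc i m := by
  simp only [omegaIcc, omegaBotJoin, omegaJoin, Option.some.injEq, Subtype.mk.injEq,
    Prod.mk.injEq]
  omega

theorem omegaIcc_succ_ne {k m : ℕ} (hkm : k < m) : omegaIcc (k + 1) m ≠ omegaIcc k m := by
  simp only [omegaIcc, ne_eq, Option.some.injEq, Subtype.mk.injEq, Prod.mk.injEq]
  omega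

theorem not_exists_omegaBot_joinEmbedding_finGenInit (Q : Type*) [PartialOrder Q]
    [WellFoundedLT Q] :
    ¬ ∃ f : OmegaStarBot → Set Q, (∀ a, f a ∈ FinGenInit Q) ∧ Function.Injective f ∧
      ∀ a b, f (omegaBotJoin a b) = f a ∪ f b := by
  rintro ⟨f, hfin, hinj, hjoin⟩
  have hIcc : ∀ i m, f (omegaIcc i m) = f (omegaIcc i i) ∪ f (omegaIcc m m) := fun i m => by
    rw [← hjoin, omegaBotJoin_omegaIcc_self]
  obtain ⟨k, m, hkm, heq⟩ := exists_lt_union_succ_eq_union (D := fun n => f (omegaIcc n n))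
    (fun n => mem_finGenInit_iff.1 (hfin _)) fun i k m hik hkm => by
      rw [← hIcc, ← omegaBotJoin_omegaIcc_of_le_of_le hik hkm, hjoin]
      exact subset_union_left
  exact omegaIcc_succ_ne hkm (hinj (by rw [hIcc (k + 1) m, hIcc k m, heq]))

theorem singleton_mem_lowerClosure_image_singleton {β : Type*} {s : Set β} {b : β} :
    ({b} : Finset β) ∈ lowerClosure ((fun x => ({x} : Finset β)) '' s) ↔ b ∈ s := by
  simp [mem_lowerClosure]

theorem not_exists_omegaBot_joinEmbedding_finset (β : Type*) [DecidableEq β] :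
    ¬ ∃ f : OmegaStarBot → Finset β, Function.Injective f ∧
      ∀ a b, f (omegaBotJoin a b) = f a ∪ f b := by
  rintro ⟨f, hinj, hjoin⟩
  -- the singletons form an infinite antichain in the well-founded poset `Finset β`
  refine not_exists_omegaBot_joinEmbedding_finGenInit (Finset β)
    ⟨fun a => lowerClosure ((fun x => ({x} : Finset β)) '' f a), fun a => ?_, fun a a' h => ?_,
      fun a a' => ?_⟩
  · exact mem_finGenInit_iff.2 ⟨_, (f a).finite_toSet.image _, rfl⟩
  · refine hinj (Finset.ext fun b => ?_)
    simpa only [SetLike.mem_coe, singleton_mem_lowerClosure_image_singleton, Finset.mem_coe]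
      using Set.ext_iff.1 h {b}
  · dsimp only
    rw [hjoin, Finset.coe_union, image_union, lowerClosure_union, LowerSet.coe_sup]

/-- For a well-founded poset `Q`, `Ω̲(ω*)` does not embed into `I_{<ω}(Q)` as a
join-subsemilattice; in particular (taking `Q = ℕ` as an antichain) it does not embed into
`[ω]^{<ω}` as a join-subsemilattice. -/
theorem omegaBot_not_embeds_finGenInit :
    (∀ (Q : Type) [PartialOrder Q], WellFounded ((· < ·) : Q → Q → Prop) →
      ¬ ∃ f : OmegaStarBot → Set Q, (∀ a, f a ∈ FinGenInit Q) ∧ Function.Injective f ∧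
          ∀ a b, f (omegaBotJoin a b) = f a ∪ f b) ∧
    ¬ ∃ f : OmegaStarBot → Finset ℕ, Function.Injective f ∧
        ∀ a b, f (omegaBotJoin a b) = f a ∪ f b :=
  ⟨fun Q _ hwf => have : WellFoundedLT Q := ⟨hwf⟩
    not_exists_omegaBot_joinEmbedding_finGenInit Q,
    not_exists_omegaBot_joinEmbedding_finset ℕ⟩
end

section
/- Let L be an algebraic lattice (a complete lattice in which every element is a join of compact elements). Then L is well-founded if and only if the join-semilattice K(L) of compact elements of L is well-founded and neither Ω̲(ω*) nor [ω]^{<ω} embeds into K(L) as a join-subsemilattice. -/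
/-!
If `L` is well-founded, so is `K(L)`, and an embedding of `Ω̲(ω*)` or `[ω]^{<ω}` would make the
joins of the images of its tails `{(i, j) : n ≤ i}`, resp. `{F : n ≤ min F}`, strictly decrease.

Conversely, let `x₀ > x₁ > ⋯`. Suppose first that from some `N` on, every compact `s ≤ x_N` with
`s ≰ x_n` is separated from `x_n` by a deeper level: `x_n ≰ s ⊔ x_m`. Then one chooses compact
`w_k` below deeper and deeper levels, each outside the join of its predecessors and the next
level; they are independent, and `F ↦ ⨆_{k ∈ F} w_k` embeds `[ω]^{<ω}`. Otherwise the failures of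
separation produce compact `b_i` with `b_j ≤ b_i ⊔ b_m` for `i < j < m` but `b_i ≰ b_j ⊔ b_m`
for `i < j, m`. Well-foundedness of `K(L)` lets one thin this sequence so that moreover
`b_m ≰ b_i ⊔ b_j` for `i < j < m`, and then `(i, j) ↦ b_i ⊔ b_j`, together with `⊥`, embeds
`Ω̲(ω*)`.
-/

open Set

open Filter Function

section CompactElements

variable {L : Type*} [CompleteLattice L]

theorem isCompactElement_bot : IsCompactElement (⊥ : L) := by
  simpa using CompleteLattice.isCompactElement_finsetSup (f := id) (∅ : Finset L) (by simp)

theorem IsCompactElement.sup {a b : L} (ha : IsCompactElement a) (hb : IsCompactElement b) :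
    IsCompactElement (a ⊔ b) := by
  classical
  simpa using CompleteLattice.isCompactElement_finsetSup (f := id) {a, b} (by simp [ha, hb])

variable [IsCompactlyGenerated L]

theorem exists_isCompactElement_le_not_le {a b : L} (h : ¬ a ≤ b) :
    ∃ c, IsCompactElement c ∧ c ≤ a ∧ ¬ c ≤ b := by
  simpa [le_iff_compact_le_imp (a := a)] using h

theorem IsCompactElement.exists_le_sup_of_le_sup {c a t : L} (hc : IsCompactElement c)
    (h : c ≤ a ⊔ t) : ∃ y, IsCompactElement y ∧ y ≤ t ∧ c ≤ a ⊔ y := by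
  set D : Set L := {z | ∃ y, IsCompactElement y ∧ y ≤ t ∧ z = a ⊔ y}
  have hD : a ⊔ t ≤ sSup D := by
    refine sup_le (le_sSup_of_le ⟨⊥, isCompactElement_bot, bot_le, by simp⟩ le_rfl) ?_
    refine le_iff_compact_le_imp.2 fun y hy hyt => ?_
    exact le_sSup_of_le ⟨y, hy, hyt, rfl⟩ le_sup_right
  have hdir : DirectedOn (· ≤ ·) D := by
    rintro _ ⟨y₁, hy₁, hy₁t, rfl⟩ _ ⟨y₂, hy₂, hy₂t, rfl⟩
    exact ⟨a ⊔ (y₁ ⊔ y₂), ⟨y₁ ⊔ y₂, hy₁.sup hy₂, sup_le hy₁t hy₂t, rfl⟩,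
      sup_le_sup_left le_sup_left a, sup_le_sup_left le_sup_right a⟩
  obtain ⟨_, ⟨y, hy, hyt, rfl⟩, hcy⟩ :=
    (CompleteLattice.isCompactElement_iff_le_of_directed_sSup_le L c).1 hc D
      ⟨a ⊔ ⊥, ⊥, isCompactElement_bot, bot_le, rfl⟩ hdir (h.trans hD)
  exact ⟨y, hy, hyt, hcy⟩

end CompactElements

section Forward

variable {L : Type*} [CompleteLattice L]

/-- The joins of the tails `f '' S n` strictly decrease: `f (p n)` lies below the `n`-th one but,
by compactness and freshness, not below the next. -/
theorem not_wellFounded_of_join_embedding {P : Type*} {j : P → P → P} {f : P → L}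
    (hc : ∀ a, IsCompactElement (f a)) (hf : Injective f) (hj : ∀ a b, f (j a b) = f a ⊔ f b)
    {S : ℕ → Set P} (hS : Antitone S) (hSj : ∀ n, ∀ a ∈ S n, ∀ b ∈ S n, j a b ∈ S n)
    {p : ℕ → P} (hp : ∀ n, p n ∈ S n) (hfresh : ∀ n, ∀ a ∈ S (n + 1), j (p n) a ≠ a) :
    ¬ WellFounded ((· < ·) : L → L → Prop) := by
  have hdir : ∀ n, DirectedOn (· ≤ ·) (f '' S n) := by
    rintro n _ ⟨a, ha, rfl⟩ _ ⟨b, hb, rfl⟩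
    exact ⟨f (j a b), mem_image_of_mem f (hSj n a ha b hb), by simp [hj]⟩
  have hlt : ∀ n, sSup (f '' S (n + 1)) < sSup (f '' S n) := by
    intro n
    refine lt_of_le_not_ge (sSup_le_sSup (image_mono (hS n.le_succ))) fun hle => ?_
    obtain ⟨_, ⟨a, ha, rfl⟩, hpa⟩ :=
      (CompleteLattice.isCompactElement_iff_le_of_directed_sSup_le L _).1 (hc (p n)) _
        ⟨_, mem_image_of_mem f (hp (n + 1))⟩ (hdir (n + 1))
        ((le_sSup (mem_image_of_mem f (hp n))).trans hle)
    exact hfresh n a ha (hf (by rw [hj, sup_eq_right.2 hpa]))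
  exact (RelEmbedding.natGT _ hlt).not_wellFounded

theorem not_wellFounded_of_finset_embedding {f : Finset ℕ → L}
    (hc : ∀ a, IsCompactElement (f a)) (hf : Injective f) (hj : ∀ a b, f (a ∪ b) = f a ⊔ f b) :
    ¬ WellFounded ((· < ·) : L → L → Prop) := by
  refine not_wellFounded_of_join_embedding hc hf hj (S := fun n => {F | ∀ i ∈ F, n ≤ i})
    (p := fun n => {n}) ?_ ?_ (by simp) ?_
  · intro n n' hnn' F hF i hi
    exact hnn'.trans (hF i hi)
  · intro n F hF G hG i hi
    rcases Finset.mem_union.1 hi with hi | hi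
    exacts [hF i hi, hG i hi]
  · intro n F hF hnF
    have := hF n (hnF ▸ Finset.mem_union_left F (Finset.mem_singleton_self n))
    omega

theorem not_wellFounded_of_omegaStarBot_embedding {f : OmegaStarBot → L}
    (hc : ∀ a, IsCompactElement (f a)) (hf : Injective f)
    (hj : ∀ a b, f (omegaBotJoin a b) = f a ⊔ f b) :
    ¬ WellFounded ((· < ·) : L → L → Prop) := by
  refine not_wellFounded_of_join_embedding hc hf hj
    (S := fun n => some '' {q : OmegaStar | n ≤ q.1.1})
    (p := fun n => some ⟨(n, n + 1), n.lt_succ_self⟩) ?_ ?_ (fun n => ⟨_, Nat.le_refl n, rfl⟩) ?_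
  · intro n n' hnn'
    exact image_mono fun q hq => hnn'.trans hq
  · rintro n _ ⟨q, hq, rfl⟩ _ ⟨q', hq', rfl⟩
    exact ⟨omegaJoin q q', (le_min hq hq' : n ≤ min q.1.1 q'.1.1), rfl⟩
  · rintro n _ ⟨q, hq, rfl⟩ h
    have := congrArg (Option.map fun r : OmegaStar => r.1.1) h
    simp only [omegaBotJoin, omegaJoin, Option.map_some, Option.some.injEq] at this
    change n + 1 ≤ q.1.1 at hq
    omega

end Forward

section Independent

variable {L : Type*} [CompleteLattice L]

theorem injective_finsetSup_of_not_le {ι : Type*} {w : ι → L}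
    (hw : ∀ k (G : Finset ι), k ∉ G → ¬ w k ≤ G.sup w) : Injective fun G : Finset ι => G.sup w := by
  intro G₁ G₂ (h : G₁.sup w = G₂.sup w)
  ext k
  exact ⟨fun hk => by_contra fun hk' => hw k G₂ hk' (h ▸ Finset.le_sup hk),
    fun hk => by_contra fun hk' => hw k G₁ hk' (h ▸ Finset.le_sup hk)⟩

theorem exists_finset_embedding_of_not_le {w : ℕ → L} (hc : ∀ k, IsCompactElement (w k))
    (hw : ∀ k (G : Finset ℕ), k ∉ G → ¬ w k ≤ G.sup w) :
    ∃ f : Finset ℕ → L, (∀ a, IsCompactElement (f a)) ∧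
      Injective f ∧ ∀ a b, f (a ∪ b) = f a ⊔ f b :=
  ⟨fun G => G.sup w, fun G => CompleteLattice.isCompactElement_finsetSup G fun k _ => hc k,
    injective_finsetSup_of_not_le hw, fun _ _ => Finset.sup_union⟩

theorem not_le_finsetSup_of_not_le_sup {w s y : ℕ → L} (hs : Monotone s) (hy : Antitone y)
    (hws : ∀ k, w k ≤ s (k + 1)) (hwy : ∀ k, w k ≤ y k) (hw : ∀ k, ¬ w k ≤ s k ⊔ y (k + 1))
    (k : ℕ) (G : Finset ℕ) (hk : k ∉ G) : ¬ w k ≤ G.sup w := by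
  refine fun h => hw k (h.trans (Finset.sup_le fun i hi => ?_))
  rcases lt_or_gt_of_ne (ne_of_mem_of_not_mem hi hk) with hik | hik
  · exact le_sup_of_le_left ((hws i).trans (hs hik))
  · exact le_sup_of_le_right ((hwy i).trans (hy hik))

end Independent

structure AbsorbingSeq {L : Type*} [CompleteLattice L] (b : ℕ → L) : Prop where
  isCompactElement : ∀ i, IsCompactElement (b i)
  le_sup : ∀ ⦃i j m⦄, i < j → j < m → b j ≤ b i ⊔ b m
  not_le_sup : ∀ ⦃i j m⦄, i < j → i < m → ¬ b i ≤ b j ⊔ b m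

namespace AbsorbingSeq

variable {L : Type*} [CompleteLattice L] {b : ℕ → L}

theorem comp (hb : AbsorbingSeq b) {ρ : ℕ → ℕ} (hρ : StrictMono ρ) : AbsorbingSeq (b ∘ ρ) :=
  ⟨fun _ => hb.isCompactElement _, fun _ _ _ h₁ h₂ => hb.le_sup (hρ h₁) (hρ h₂),
    fun _ _ _ h₁ h₂ => hb.not_le_sup (hρ h₁) (hρ h₂)⟩

theorem ne_bot (hb : AbsorbingSeq b) (i : ℕ) : b i ≠ ⊥ := fun h =>
  hb.not_le_sup i.lt_succ_self i.lt_succ_self (h ▸ bot_le)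

theorem le_sup_of_le_of_le (hb : AbsorbingSeq b) {p k q : ℕ} (hpk : p ≤ k) (hkq : k ≤ q) :
    b k ≤ b p ⊔ b q := by
  rcases hpk.eq_or_lt with rfl | hpk
  · exact le_sup_left
  rcases hkq.eq_or_lt with rfl | hkq
  · exact le_sup_right
  exact hb.le_sup hpk hkq

theorem le_sup_of_le_sup (hb : AbsorbingSeq b) {p k q : ℕ} {c : L} (hpk : p ≤ k) (hkq : k ≤ q)
    (h : b q ≤ b p ⊔ c) : b k ≤ b p ⊔ c :=
  (hb.le_sup_of_le_of_le hpk hkq).trans (sup_le le_sup_left h)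

/-- If infinitely many rows `m ↦ b p ⊔ b m` were eventually constant, their limits would form a
strictly decreasing sequence of compact elements. -/
theorem eventually_not_le_sup (hb : AbsorbingSeq b)
    (hK : WellFounded (fun a b : {c : L // IsCompactElement c} => a < b)) :
    ∃ N, ∀ p, N ≤ p → ∀ q, p < q → ∀ᶠ m in atTop, ¬ b m ≤ b p ⊔ b q := by
  by_contra! h
  have stable : ∀ p q, (∃ᶠ m in atTop, b m ≤ b p ⊔ b q) → ∀ m, p ≤ m → b m ≤ b p ⊔ b q := by
    intro p q hfr m hpm
    obtain ⟨m', hmm', hm'⟩ := frequently_atTop.1 hfr m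
    exact hb.le_sup_of_le_sup hpm hmm' hm'
  let S : Set {c : L // IsCompactElement c} :=
    {c | ∃ p q, p < q ∧ c.1 = b p ⊔ b q ∧ ∀ m, p ≤ m → b m ≤ b p ⊔ b q}
  have mem : ∀ p q, p < q → (∃ᶠ m in atTop, b m ≤ b p ⊔ b q) →
      (⟨_, (hb.isCompactElement p).sup (hb.isCompactElement q)⟩ : {c : L // IsCompactElement c})
        ∈ S :=
    fun p q hpq hfr => ⟨p, q, hpq, rfl, stable p q hfr⟩
  obtain ⟨p₀, -, q₀, hpq₀, hfr₀⟩ := h 0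
  obtain ⟨⟨_, _⟩, ⟨p, q, hpq, rfl, hst⟩, hmin⟩ := hK.has_min S ⟨_, mem p₀ q₀ hpq₀ hfr₀⟩
  obtain ⟨p', hpp', q', hpq', hfr'⟩ := h (p + 1)
  refine hmin _ (mem p' q' hpq' hfr') (Subtype.mk_lt_mk.2 (lt_of_le_of_ne ?_ fun heq => ?_))
  · exact sup_le (hst p' (by omega)) (hst q' (by omega))
  · exact hb.not_le_sup (by omega : p < p') (by omega : p < q') (heq ▸ le_sup_left)

theorem exists_strictMono_not_le_sup (hb : AbsorbingSeq b)
    (hK : WellFounded (fun a b : {c : L // IsCompactElement c} => a < b)) :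
    ∃ ρ : ℕ → ℕ, StrictMono ρ ∧ ∀ ⦃i j m⦄, i < j → j < m → ¬ b (ρ m) ≤ b (ρ i) ⊔ b (ρ j) := by
  obtain ⟨N, hN⟩ := hb.eventually_not_le_sup hK
  have : ∀ q, ∃ m, q < m ∧ ∀ p ∈ Finset.Ico N q, ¬ b m ≤ b p ⊔ b q := fun q =>
    ((eventually_gt_atTop q).and ((eventually_all_finset _).2 fun p hp =>
      hN p (Finset.mem_Ico.1 hp).1 q (Finset.mem_Ico.1 hp).2)).exists
  choose next hgt hnext using this
  let ρ : ℕ → ℕ := fun k => next^[k] N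
  have hρ : ∀ k, ρ (k + 1) = next (ρ k) := fun k => iterate_succ_apply' _ _ _
  have hmono : StrictMono ρ := strictMono_nat_of_lt_succ fun k => (hρ k).symm ▸ hgt _
  refine ⟨ρ, hmono, fun i j m hij hjm h => ?_⟩
  have hi : ρ i ∈ Finset.Ico N (ρ j) := Finset.mem_Ico.2 ⟨hmono.monotone i.zero_le, hmono hij⟩
  refine hnext (ρ j) (ρ i) hi ?_
  rw [← hρ]
  exact hb.le_sup_of_le_sup (hmono (hij.trans j.lt_succ_self)).le (hmono.monotone hjm) h

theorem sup_le_sup_iff (hb : AbsorbingSeq b)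
    (hthin : ∀ ⦃i j m⦄, i < j → j < m → ¬ b m ≤ b i ⊔ b j) {i j i' j' : ℕ} (hij : i < j)
    (hij' : i' < j') :
    b i ⊔ b j ≤ b i' ⊔ b j' ↔ i' ≤ i ∧ j ≤ j' := by
  refine ⟨fun h => ⟨?_, ?_⟩, fun ⟨hi, hj⟩ => sup_le (hb.le_sup_of_le_of_le hi (hij.le.trans hj))
    (hb.le_sup_of_le_of_le (hi.trans hij.le) hj)⟩
  · by_contra! hii'
    exact hb.not_le_sup hii' (hii'.trans hij') (le_sup_left.trans h)
  · by_contra! hjj'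
    exact hthin hij' hjj' (le_sup_right.trans h)

theorem exists_omegaStarBot_embedding (hb : AbsorbingSeq b)
    (hthin : ∀ ⦃i j m⦄, i < j → j < m → ¬ b m ≤ b i ⊔ b j) :
    ∃ f : OmegaStarBot → L, (∀ a, IsCompactElement (f a)) ∧
      Injective f ∧ ∀ a b, f (omegaBotJoin a b) = f a ⊔ f b := by
  let g : OmegaStar → L := fun q => b q.1.1 ⊔ b q.1.2
  have hg : ∀ q q', g q ≤ g q' ↔ q'.1.1 ≤ q.1.1 ∧ q.1.2 ≤ q'.1.2 :=
    fun q q' => hb.sup_le_sup_iff hthin q.2 q'.2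
  have hg_ne_bot : ∀ q, g q ≠ ⊥ := fun q h => hb.ne_bot _ (sup_eq_bot_iff.1 h).1
  refine ⟨fun o => o.elim ⊥ g, ?_, ?_, ?_⟩
  · rintro (_ | q)
    exacts [isCompactElement_bot, (hb.isCompactElement _).sup (hb.isCompactElement _)]
  · rintro (_ | q) (_ | q') h
    · rfl
    · exact absurd h.symm (hg_ne_bot q')
    · exact absurd h (hg_ne_bot q)
    · obtain ⟨h₁, h₂⟩ := (hg q q').1 h.le
      obtain ⟨h₃, h₄⟩ := (hg q' q).1 h.ge
      exact congrArg some (Subtype.ext (Prod.ext (le_antisymm h₃ h₁) (le_antisymm h₂ h₄)))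
  · rintro (_ | q) (_ | q')
    · simp [omegaBotJoin]
    · simp [omegaBotJoin]
    · simp [omegaBotJoin]
    · refine le_antisymm (sup_le ?_ ?_) (sup_le ((hg _ _).2 ⟨min_le_left _ _, le_max_left _ _⟩)
        ((hg _ _).2 ⟨min_le_right _ _, le_max_right _ _⟩))
      · rcases min_choice q.1.1 q'.1.1 with h | h <;> simp only [omegaJoin, h]
        exacts [le_sup_of_le_left le_sup_left, le_sup_of_le_right le_sup_left]
      · rcases max_choice q.1.2 q'.1.2 with h | h <;> simp only [omegaJoin, h]
        exacts [le_sup_of_le_left le_sup_right, le_sup_of_le_right le_sup_right]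

end AbsorbingSeq

section Backward

variable {L : Type*} [CompleteLattice L] [IsCompactlyGenerated L] {x : ℕ → L}

/-- In the paper's language: the chain of ideals of compact elements below `x n`, `N ≤ n`, is
separating (see `Separating`). -/
def IsSeparatingTail (x : ℕ → L) (N : ℕ) : Prop :=
  ∀ s, IsCompactElement s → s ≤ x N → ∀ n, ¬ s ≤ x n → ∃ m, ¬ x n ≤ s ⊔ x m

theorem exists_independent_of_isSeparatingTail (hx : StrictAnti x) {N : ℕ}
    (hN : IsSeparatingTail x N) :
    ∃ w : ℕ → L, (∀ k, IsCompactElement (w k)) ∧ ∀ k (G : Finset ℕ), k ∉ G → ¬ w k ≤ G.sup w := by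
  let Good (p : L × ℕ) : Prop := IsCompactElement p.1 ∧ p.1 ≤ x N ∧ ¬ p.1 ≤ x p.2
  have step : ∀ p, Good p → ∃ q : L × ℕ,
      IsCompactElement q.1 ∧ q.1 ≤ x p.2 ∧ ¬ q.1 ≤ p.1 ⊔ x q.2 := by
    rintro ⟨s, ℓ⟩ ⟨hs, hsN, hsℓ⟩
    obtain ⟨m, hm⟩ := hN s hs hsN ℓ hsℓ
    obtain ⟨z, hz, hzℓ, hzm⟩ := exists_isCompactElement_le_not_le hm
    exact ⟨(z, m), hz, hzℓ, hzm⟩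
  choose! next hnext using step
  obtain ⟨c, hc, hcN, hcN'⟩ := exists_isCompactElement_le_not_le (hx N.lt_succ_self).not_ge
  -- the state: the join of `c` and of the elements chosen so far, and the current level
  let st : ℕ → L × ℕ := fun k => (fun p : L × ℕ => (p.1 ⊔ (next p).1, (next p).2))^[k] (c, N + 1)
  have hst : ∀ k, st (k + 1) = ((st k).1 ⊔ (next (st k)).1, (next (st k)).2) :=
    fun k => iterate_succ_apply' _ _ _
  have good : ∀ k, Good (st k) := by
    intro k
    induction k with
    | zero => exact ⟨hc, hcN, hcN'⟩
    | succ k ih =>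
      obtain ⟨hz, hzℓ, hzm⟩ := hnext _ ih
      have hNℓ : N ≤ (st k).2 := by
        by_contra h
        exact ih.2.2 (ih.2.1.trans (hx.antitone (by omega)))
      rw [hst]
      exact ⟨ih.1.sup hz, sup_le ih.2.1 (hzℓ.trans (hx.antitone hNℓ)),
        fun h => hzm (le_sup_right.trans (h.trans le_sup_right))⟩
  have hℓ : Monotone fun k => (st k).2 := by
    refine monotone_nat_of_le_succ fun k => ?_
    obtain ⟨-, hzℓ, hzm⟩ := hnext _ (good k)
    rw [hst]
    by_contra h
    exact hzm ((hzℓ.trans (hx.antitone (by omega))).trans le_sup_right)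
  refine ⟨fun k => (next (st k)).1, fun k => (hnext _ (good k)).1,
    not_le_finsetSup_of_not_le_sup (s := fun k => (st k).1) (y := fun k => x (st k).2)
      (monotone_nat_of_le_succ fun k => ?_) (hx.antitone.comp_monotone hℓ) (fun k => ?_)
      (fun k => (hnext _ (good k)).2.1) (fun k => ?_)⟩
  · rw [hst]; exact le_sup_left
  · rw [hst]; exact le_sup_right
  · rw [hst]; exact (hnext _ (good k)).2.2

theorem exists_absorbingSeq_of_forall_not_isSeparatingTail (hx : Antitone x)
    (h : ∀ N, ¬ IsSeparatingTail x N) : ∃ b : ℕ → L, AbsorbingSeq b := by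
  simp only [IsSeparatingTail, not_forall, not_exists, not_not] at h
  choose s hs hsx n hn hcover using h
  have hlt : ∀ ℓ, ℓ < n ℓ := fun ℓ => by
    by_contra! h
    exact hn ℓ ((hsx ℓ).trans (hx h))
  have hY : ∀ k c ℓ, IsCompactElement c → c ≤ x (n k) →
      ∃ y, IsCompactElement y ∧ y ≤ x ℓ ∧ c ≤ s k ⊔ y :=
    fun k c ℓ hc hck => hc.exists_le_sup_of_le_sup (hck.trans (hcover k ℓ))
  choose! Y hYc hYx hcY using hY
  -- terms are pairs `(ℓ, c)`; `r` gives `c_j ≤ s ℓ_i ⊔ c_m ≤ c_i ⊔ c_m` for `i < j < m`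
  let P (p : ℕ × L) : Prop := IsCompactElement p.2 ∧ s p.1 ≤ p.2 ∧ p.2 ≤ x p.1
  let r (p p' : ℕ × L) : Prop := n p.1 ≤ p'.1 ∧ ∀ k, n k ≤ p.1 → p.2 ≤ s k ⊔ p'.2
  obtain ⟨f, hP, hr⟩ := exists_seq_of_forall_finset_exists P r fun F hF => by
    let ℓ := F.sup fun p => n p.1
    let T (p : ℕ × L) : Finset ℕ := (Finset.range (p.1 + 1)).filter fun k => n k ≤ p.1
    have hT : ∀ p ∈ F, ∀ k ∈ T p, IsCompactElement p.2 ∧ p.2 ≤ x (n k) := fun p hp k hk =>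
      ⟨(hF p hp).1, (hF p hp).2.2.trans (hx (Finset.mem_filter.1 hk).2)⟩
    refine ⟨(ℓ, s ℓ ⊔ F.sup fun p => (T p).sup fun k => Y k p.2 ℓ), ⟨?_, le_sup_left, ?_⟩,
      fun p hp => ⟨Finset.le_sup (f := fun p => n p.1) hp, fun k hk => ?_⟩⟩
    · exact (hs ℓ).sup (CompleteLattice.isCompactElement_finsetSup _ fun p hp =>
        CompleteLattice.isCompactElement_finsetSup _ fun k hk =>
          hYc _ _ _ (hT p hp k hk).1 (hT p hp k hk).2)
    · exact sup_le (hsx ℓ) (Finset.sup_le fun p hp => Finset.sup_le fun k hk =>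
        hYx _ _ _ (hT p hp k hk).1 (hT p hp k hk).2)
    · have hkT : k ∈ T p :=
        Finset.mem_filter.2 ⟨Finset.mem_range.2 (by have := hlt k; omega), hk⟩
      refine (hcY _ _ ℓ (hT p hp k hkT).1 (hT p hp k hkT).2).trans (sup_le_sup_left ?_ _)
      exact le_sup_of_le_right
        (Finset.le_sup_of_le hp (Finset.le_sup (f := fun k => Y k p.2 ℓ) hkT))
  refine ⟨fun i => (f i).2,
    ⟨fun i => (hP i).1, fun i j m hij hjm => ?_, fun i j m hij him hle => ?_⟩⟩
  · exact ((hr j m hjm).2 _ (hr i j hij).1).trans (sup_le_sup_right (hP i).2.1 _)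
  · refine hn (f i).1 ((hP i).2.1.trans (hle.trans (sup_le ?_ ?_)))
    · exact (hP j).2.2.trans (hx (hr i j hij).1)
    · exact (hP m).2.2.trans (hx (hr i m him).1)

end Backward

/-- An algebraic lattice `L` is well-founded iff the join-semilattice `K(L)` of
compact elements is well-founded and neither `Ω̲(ω*)` nor `[ω]^{<ω}` embeds into `K(L)` as a
join-subsemilattice. -/
theorem algebraic_wellFounded_iff {L : Type*} [CompleteLattice L]
    (halg : ∀ x : L, ∃ s : Set L, (∀ c ∈ s, IsCompactElement c) ∧ sSup s = x) :
    WellFounded ((· < ·) : L → L → Prop) ↔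
      (WellFounded (fun a b : {c : L // IsCompactElement c} => a < b) ∧
        (¬ ∃ f : OmegaStarBot → L, (∀ a, IsCompactElement (f a)) ∧
            Function.Injective f ∧ ∀ a b, f (omegaBotJoin a b) = f a ⊔ f b) ∧
        ¬ ∃ f : Finset ℕ → L, (∀ a, IsCompactElement (f a)) ∧
            Function.Injective f ∧ ∀ a b, f (a ∪ b) = f a ⊔ f b) := by
  have : IsCompactlyGenerated L := ⟨halg⟩
  refine ⟨fun hwf => ⟨InvImage.wf Subtype.val hwf,
    fun ⟨f, hc, hf, hj⟩ => not_wellFounded_of_omegaStarBot_embedding hc hf hj hwf,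
    fun ⟨f, hc, hf, hj⟩ => not_wellFounded_of_finset_embedding hc hf hj hwf⟩, ?_⟩
  rintro ⟨hK, hΩ, hω⟩
  refine wellFounded_iff_isEmpty_descending_chain.2 ⟨fun ⟨x, hx⟩ => ?_⟩
  replace hx : StrictAnti x := strictAnti_nat_of_succ_lt hx
  by_cases hsep : ∃ N, IsSeparatingTail x N
  · obtain ⟨N, hN⟩ := hsep
    obtain ⟨w, hc, hw⟩ := exists_independent_of_isSeparatingTail hx hN
    exact hω (exists_finset_embedding_of_not_le hc hw)
  · obtain ⟨b, hb⟩ :=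
      exists_absorbingSeq_of_forall_not_isSeparatingTail hx.antitone (not_exists.1 hsep)
    obtain ⟨ρ, hρ, hthin⟩ := hb.exists_strictMono_not_le_sup hK
    exact hΩ ((hb.comp hρ).exists_omegaStarBot_embedding hthin)
end

section
/- Let P be a join-semilattice. Then J(P), the set of ideals of P ordered by inclusion, is well-founded if and only if P is well-founded and neither Ω(ω*) nor [ω]^{<ω} embeds into P as a join-subsemilattice. -/
open Set

/-! A strictly decreasing sequence of ideals `I n` with `a n ∈ I n \ I (n+1)` gives a sequence in
which no term lies in the ideal generated by the later terms. If no subsequence of `a` is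
independent, the greedy search for one gets stuck: this produces nested "traps" `(Y t, R t)`, and
joining the `Y t` over suitably long blocks of consecutive `t` gives a sequence `c` with the same
property and with `c q ≤ c p ⊔ c r` for `p < q < r`. Ramsey's theorem for triples, applied to the
colouring `c k ≤ c i ⊔ c j`, then yields either the strictly decreasing sequence `c k ⊔ c (k+1)` in
`P` or the join-embedding `(i, j) ↦ c i ⊔ c j` of `Ω(ω*)`, while an independent subsequence spans
a copy of `[ω]^{<ω}`. Conversely, principal ideals embed `P` into `J(P)`, and an embedding of
`Ω(ω*)` or of `[ω]^{<ω}` generates the strictly decreasing ideals spanned by `{(i, j) | n ≤ i}`,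
resp. `{F | n ≤ min F}`. -/

theorem exists_seq_forall_rel_succ {σ : Type*} [Nonempty σ] {r : σ → σ → Prop}
    (h : ∀ s, ∃ t, r s t) : ∃ f : ℕ → σ, ∀ n, r (f n) (f (n + 1)) := by
  choose g hg using h
  obtain ⟨s₀⟩ := ‹Nonempty σ›
  exact ⟨fun n => g^[n] s₀, fun n => by
    simp only [Function.iterate_succ_apply']; exact hg _⟩

theorem Set.Infinite.inter_Ioi {A : Set ℕ} (hA : A.Infinite) (x : ℕ) : (A ∩ Ioi x).Infinite :=
  (hA.sdiff (finite_Iic x)).mono fun _ hy => ⟨hy.1, by simpa using hy.2⟩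

theorem Set.Infinite.exists_infinite_sep_eq {B : Set ℕ} (hB : B.Infinite) (f : ℕ → Bool) :
    ∃ b, {y ∈ B | f y = b}.Infinite := by
  have hsplit : B = {y ∈ B | f y = true} ∪ {y ∈ B | f y = false} := by
    ext y; cases h : f y <;> simp [h]
  rw [hsplit, Set.infinite_union] at hB
  exact hB.elim (⟨true, ·⟩) (⟨false, ·⟩)

/-- The inductive step in the proof of Ramsey's theorem. -/
theorem Set.Infinite.exists_infinite_forall_inter_Ioi {Φ : ℕ → Set ℕ → Bool → Prop}
    (hanti : ∀ x b ⦃B B' : Set ℕ⦄, B' ⊆ B → Φ x B b → Φ x B' b)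
    (hstep : ∀ x (B : Set ℕ), B.Infinite → ∃ B' ⊆ B, B'.Infinite ∧ ∃ b, Φ x B' b)
    {A : Set ℕ} (hA : A.Infinite) :
    ∃ H ⊆ A, H.Infinite ∧ ∃ b, ∀ x ∈ H, Φ x (H ∩ Ioi x) b := by
  let σ := {s : ℕ × Set ℕ × Bool //
    s.1 ∈ A ∧ s.2.1 ⊆ A ∩ Ioi s.1 ∧ s.2.1.Infinite ∧ Φ s.1 s.2.1 s.2.2}
  have mk : ∀ x ∈ A, ∀ B ⊆ A ∩ Ioi x, B.Infinite → ∃ s : σ, s.1.1 = x ∧ s.1.2.1 ⊆ B := by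
    intro x hx B hB hBinf
    obtain ⟨B', hB', hB'inf, b, hb⟩ := hstep x B hBinf
    exact ⟨⟨(x, B', b), hx, hB'.trans hB, hB'inf, hb⟩, rfl, hB'⟩
  have : Nonempty σ := by
    obtain ⟨x, hx⟩ := hA.nonempty
    obtain ⟨s, -⟩ := mk x hx _ subset_rfl (hA.inter_Ioi x)
    exact ⟨s⟩
  obtain ⟨f, hf⟩ := exists_seq_forall_rel_succ
    (r := fun s t : σ => t.1.1 ∈ s.1.2.1 ∧ t.1.2.1 ⊆ s.1.2.1)
    fun ⟨⟨_, B, _⟩, _, hBA, hBinf, _⟩ => by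
      obtain ⟨x', hx'⟩ := hBinf.nonempty
      obtain ⟨t, rfl, ht⟩ := mk x' (hBA hx').1 (B ∩ Ioi x')
        (inter_subset_inter_left _ (hBA.trans inter_subset_left)) (hBinf.inter_Ioi x')
      exact ⟨t, hx', ht.trans inter_subset_left⟩
  set x : ℕ → ℕ := fun n => (f n).1.1
  set B : ℕ → Set ℕ := fun n => (f n).1.2.1
  have hB : Antitone B := antitone_nat_of_succ_le fun n => (hf n).2
  have hxB : ∀ ⦃m n⦄, m < n → x n ∈ B m := fun m n hmn => by
    obtain ⟨k, rfl⟩ := Nat.exists_eq_add_of_lt hmn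
    exact hB (by omega) (hf (m + k)).1
  have hx : StrictMono x := fun m n hmn => ((f m).2.2.1 (hxB hmn)).2
  obtain ⟨b, hK⟩ := infinite_univ.exists_infinite_sep_eq fun n => (f n).1.2.2
  refine ⟨x '' {n ∈ univ | (f n).1.2.2 = b}, ?_, hK.image hx.injective.injOn, b, ?_⟩
  · rintro _ ⟨n, -, rfl⟩
    exact (f n).2.1
  · rintro _ ⟨n, ⟨-, rfl⟩, rfl⟩
    refine hanti _ _ ?_ (f n).2.2.2.2
    rintro _ ⟨⟨m, -, rfl⟩, hnm⟩
    exact hxB (hx.lt_iff_lt.1 hnm)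

theorem Set.Infinite.exists_infinite_homogeneous_pairs {A : Set ℕ} (hA : A.Infinite)
    (col : ℕ → ℕ → Bool) :
    ∃ H ⊆ A, H.Infinite ∧ ∃ b, ∀ x ∈ H, ∀ y ∈ H, x < y → col x y = b := by
  obtain ⟨H, hHA, hH, b, hb⟩ := hA.exists_infinite_forall_inter_Ioi
    (Φ := fun x B b => ∀ y ∈ B, col x y = b) (fun _ _ _ _ hB h y hy => h y (hB hy))
    fun x B hB => ⟨_, sep_subset _ _, (hB.exists_infinite_sep_eq (col x)).choose_spec,
      _, fun _ hy => hy.2⟩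
  exact ⟨H, hHA, hH, b, fun x hx y hy hxy => hb x hx y ⟨hy, hxy⟩⟩

theorem exists_infinite_homogeneous_triples (col : ℕ → ℕ → ℕ → Bool) :
    ∃ H : Set ℕ, H.Infinite ∧ ∃ b,
      ∀ x ∈ H, ∀ y ∈ H, ∀ z ∈ H, x < y → y < z → col x y z = b := by
  obtain ⟨H, -, hH, b, hb⟩ := infinite_univ.exists_infinite_forall_inter_Ioi
    (Φ := fun x B b => ∀ y ∈ B, ∀ z ∈ B, y < z → col x y z = b)
    (fun _ _ _ _ hB h y hy z hz => h y (hB hy) z (hB hz))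
    fun x B hB => by
      obtain ⟨H, hHB, hH, b, hb⟩ := hB.exists_infinite_homogeneous_pairs (col x)
      exact ⟨H, hHB, hH, b, hb⟩
  exact ⟨H, hH, b, fun x hx y hy z hz hxy hyz => hb x hx y ⟨hy, hxy⟩ z ⟨hz, hxy.trans hyz⟩ hyz⟩

theorem exists_strictMono_homogeneous_triples (Q : ℕ → ℕ → ℕ → Prop) :
    ∃ e : ℕ → ℕ, StrictMono e ∧
      ((∀ ⦃i j k⦄, i < j → j < k → Q (e i) (e j) (e k)) ∨
        ∀ ⦃i j k⦄, i < j → j < k → ¬ Q (e i) (e j) (e k)) := by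
  classical
  obtain ⟨H, hH, b, hb⟩ := exists_infinite_homogeneous_triples fun x y z => decide (Q x y z)
  have he : StrictMono (Nat.nth (· ∈ H)) := Nat.nth_strictMono hH
  have hb' : ∀ ⦃i j k⦄, i < j → j < k →
      decide (Q (Nat.nth (· ∈ H) i) (Nat.nth (· ∈ H) j) (Nat.nth (· ∈ H) k)) = b :=
    fun i j k hij hjk => hb _ (Nat.nth_mem_of_infinite hH i) _ (Nat.nth_mem_of_infinite hH j) _
      (Nat.nth_mem_of_infinite hH k) (he hij) (he hjk)
  refine ⟨_, he, ?_⟩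
  cases b
  · exact Or.inr fun i j k hij hjk => by simpa using hb' hij hjk
  · exact Or.inl fun i j k hij hjk => by simpa using hb' hij hjk

section JoinSpan

variable {P : Type*} [SemilatticeSup P]

theorem IsIdeal.isLowerSet {I : Set P} (hI : IsIdeal I) : IsLowerSet I :=
  fun _ _ hxy hy => hI.2.2 _ _ hxy hy

theorem IsIdeal.supClosed {I : Set P} (hI : IsIdeal I) : SupClosed I := fun x hx y hy => by
  obtain ⟨z, hz, hxz, hyz⟩ := hI.2.1 x hx y hy
  exact hI.2.2 _ _ (sup_le hxz hyz) hz

theorem SupClosed.isIdeal_lowerClosure {D : Set P} (hD : SupClosed D) (hne : D.Nonempty) :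
    IsIdeal (lowerClosure D : Set P) := by
  refine ⟨hne.mono subset_lowerClosure, ?_, fun x y hxy hy => (lowerClosure D).lower hxy hy⟩
  rintro x ⟨u, hu, hxu⟩ y ⟨v, hv, hyv⟩
  exact ⟨u ⊔ v, subset_lowerClosure (hD hu hv), le_sup_of_le_left hxu, le_sup_of_le_right hyv⟩

def joinSpan (a : ℕ → P) (T : Set ℕ) : Set P :=
  {z | ∃ S : Finset ℕ, ↑S ⊆ T ∧ ∃ hS : S.Nonempty, z ≤ S.sup' hS a}

variable {a : ℕ → P} {T T' : Set ℕ}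

theorem joinSpan_mono (h : T ⊆ T') : joinSpan a T ⊆ joinSpan a T' :=
  fun _ ⟨S, hS, hne, hz⟩ => ⟨S, hS.trans h, hne, hz⟩

theorem mem_joinSpan {x : ℕ} (hx : x ∈ T) : a x ∈ joinSpan a T :=
  ⟨{x}, by simpa using hx, Finset.singleton_nonempty x, by simp⟩

theorem isLowerSet_joinSpan : IsLowerSet (joinSpan a T) :=
  fun _ _ hzy ⟨S, hS, hne, hz⟩ => ⟨S, hS, hne, hzy.trans hz⟩

theorem supClosed_joinSpan : SupClosed (joinSpan a T) := by
  classical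
  rintro z ⟨S, hS, hne, hz⟩ z' ⟨S', hS', hne', hz'⟩
  refine ⟨S ∪ S', by simpa using union_subset hS hS', hne.mono Finset.subset_union_left, ?_⟩
  rw [Finset.sup'_union hne hne']
  exact sup_le_sup hz hz'

theorem joinSpan_subset {s : Set P} (hlow : IsLowerSet s) (hsup : SupClosed s)
    (h : ∀ x ∈ T, a x ∈ s) : joinSpan a T ⊆ s :=
  fun _ ⟨_, hS, hne, hz⟩ => hlow hz (hsup.finsetSup'_mem hne fun x hx => h x (hS hx))

theorem joinSpan_subset_joinSpan {b : ℕ → P} (h : ∀ x ∈ T, a x ∈ joinSpan b T') :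
    joinSpan a T ⊆ joinSpan b T' :=
  joinSpan_subset isLowerSet_joinSpan supClosed_joinSpan h

theorem le_sup'_of_mem_joinSpan {S : Finset ℕ} (hS : S.Nonempty) {z : P}
    (hz : z ∈ joinSpan a S) : z ≤ S.sup' hS a := by
  obtain ⟨S', hS', hne', hz⟩ := hz
  exact hz.trans (Finset.sup'_mono a (Finset.coe_subset.1 hS') hne')

theorem joinSpan_comp_subset {e : ℕ → ℕ} : joinSpan (a ∘ e) T ⊆ joinSpan a (e '' T) :=
  joinSpan_subset_joinSpan fun _ hx => mem_joinSpan (Set.mem_image_of_mem e hx)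

theorem eventually_mem_joinSpan_of_mem_iUnion {T : ℕ → Set ℕ} (hT : Monotone T) {z : P}
    (hz : z ∈ joinSpan a (⋃ n, T n)) : ∀ᶠ n in Filter.atTop, z ∈ joinSpan a (T n) := by
  obtain ⟨S, hS, hne, hz⟩ := hz
  obtain ⟨n, hn⟩ := hT.directed_le.exists_mem_subset_of_finset_subset_biUnion hS
  exact Filter.eventually_atTop.2 ⟨n, fun m hm => ⟨S, hn.trans (hT hm), hne, hz⟩⟩

end JoinSpan

section Embeddings

variable {P : Type*} [SemilatticeSup P]

theorem wellFounded_lt_of_wellFounded_ideals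
    (hJ : WellFounded fun I J : {I : Set P // IsIdeal I} => I < J) :
    WellFounded ((· < ·) : P → P → Prop) := by
  have : WellFoundedLT {I : Set P // IsIdeal I} := ⟨hJ⟩
  have hprin : ∀ x : P, IsIdeal (Iic x) := fun x => by
    simpa using supClosed_singleton.isIdeal_lowerClosure (singleton_nonempty x)
  exact (show StrictMono fun x : P => (⟨Iic x, hprin x⟩ : {I : Set P // IsIdeal I}) from
    fun _ _ hxy => Iic_ssubset_Iic.2 hxy).wellFoundedLT.wf

theorem not_wellFounded_ideals_of_supClosed {D : ℕ → Set P} (hne : ∀ n, (D n).Nonempty)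
    (hsup : ∀ n, SupClosed (D n)) (hanti : ∀ n, D (n + 1) ⊆ D n)
    (hwit : ∀ n, ∃ x ∈ D n, ∀ y ∈ D (n + 1), ¬ x ≤ y) :
    ¬ WellFounded fun I J : {I : Set P // IsIdeal I} => I < J := by
  refine RelEmbedding.not_wellFounded
    (RelEmbedding.natGT (fun n => ⟨_, (hsup n).isIdeal_lowerClosure (hne n)⟩) fun n => ?_)
  obtain ⟨x, hx, hxy⟩ := hwit n
  refine Subtype.mk_lt_mk.2 (ssubset_iff_subset_ne.2
    ⟨LowerSet.coe_subset_coe.2 (lowerClosure_mono (hanti n)), fun h => ?_⟩)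
  have hx' : x ∈ (lowerClosure (D (n + 1)) : Set P) := h ▸ subset_lowerClosure hx
  obtain ⟨y, hy, hxy'⟩ := hx'
  exact hxy y hy hxy'

theorem eq_of_le_of_map_sup {α : Type*} {op : α → α → α} {f : α → P}
    (hf : Function.Injective f) (hop : ∀ a b, f (op a b) = f a ⊔ f b) {x y : α}
    (h : f x ≤ f y) : op x y = y :=
  hf (by rw [hop, sup_eq_right.2 h])

theorem not_wellFounded_ideals_of_omegaStar {f : OmegaStar → P} (hf : Function.Injective f)
    (hop : ∀ a b, f (omegaJoin a b) = f a ⊔ f b) :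
    ¬ WellFounded fun I J : {I : Set P // IsIdeal I} => I < J := by
  let w : ℕ → OmegaStar := fun n => ⟨(n, n + 1), n.lt_succ_self⟩
  refine not_wellFounded_ideals_of_supClosed (D := fun n => f '' {p | n ≤ p.1.1})
    (fun n => ⟨_, mem_image_of_mem f (le_refl (w n).1.1)⟩) ?_ ?_
    fun n => ⟨_, mem_image_of_mem f (le_refl (w n).1.1), ?_⟩
  · rintro n _ ⟨p, hp, rfl⟩ _ ⟨q, hq, rfl⟩
    exact ⟨omegaJoin p q, show n ≤ min p.1.1 q.1.1 from le_min hp hq, hop p q⟩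
  · exact fun n => image_mono fun p (hp : n + 1 ≤ p.1.1) => Nat.le_of_succ_le hp
  · rintro _ ⟨p, hp : n + 1 ≤ p.1.1, rfl⟩ hle
    have := congrArg (fun q : OmegaStar => q.1.1) (eq_of_le_of_map_sup hf hop hle)
    simp only [omegaJoin, w] at this
    omega

theorem not_wellFounded_ideals_of_finset {f : Finset ℕ → P} (hf : Function.Injective f)
    (hop : ∀ a b, f (a ∪ b) = f a ⊔ f b) :
    ¬ WellFounded fun I J : {I : Set P // IsIdeal I} => I < J := by
  refine not_wellFounded_ideals_of_supClosed (D := fun n => f '' {F | ∀ m ∈ F, n ≤ m})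
    (fun n => ⟨_, mem_image_of_mem f (fun m hm => (Finset.mem_singleton.1 hm).ge)⟩) ?_ ?_
    fun n => ⟨f {n}, mem_image_of_mem f fun m hm => (Finset.mem_singleton.1 hm).ge, ?_⟩
  · rintro n _ ⟨F, hF, rfl⟩ _ ⟨G, hG, rfl⟩
    refine ⟨F ∪ G, fun m hm => ?_, hop F G⟩
    rcases Finset.mem_union.1 hm with hm | hm
    exacts [hF m hm, hG m hm]
  · exact fun n => image_mono fun F hF m hm => Nat.le_of_succ_le (hF m hm)
  · rintro _ ⟨F, hF, rfl⟩ hle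
    have hn : n ∈ F := by
      rw [← eq_of_le_of_map_sup hf hop hle]
      exact Finset.mem_union_left _ (Finset.mem_singleton_self n)
    exact absurd (hF n hn) (by omega)

end Embeddings

section Sequences

variable {P : Type*} [SemilatticeSup P]

def ForwardIndependent (a : ℕ → P) : Prop :=
  ∀ n, a n ∉ joinSpan a (Ioi n)

def JoinIndependent (a : ℕ → P) : Prop :=
  ∀ n, a n ∉ joinSpan a {n}ᶜ

def IsSupConvex (c : ℕ → P) : Prop :=
  ∀ ⦃p q r⦄, p < q → q < r → c q ≤ c p ⊔ c r

variable {a c : ℕ → P}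

theorem exists_forwardIndependent_of_ssubset {I : ℕ → Set P}
    (hI : ∀ n, IsIdeal (I n)) (h : ∀ n, I (n + 1) ⊂ I n) : ∃ a : ℕ → P, ForwardIndependent a := by
  choose a haI haN using fun n => exists_of_ssubset (h n)
  have hanti : Antitone I := antitone_nat_of_succ_le fun n => (h n).subset
  exact ⟨a, fun n hn => haN n (joinSpan_subset (hI _).isLowerSet (hI _).supClosed
    (fun m hm => hanti (Nat.succ_le_of_lt hm) (haI m)) hn)⟩

theorem ForwardIndependent.comp (ha : ForwardIndependent a) {e : ℕ → ℕ} (he : StrictMono e) :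
    ForwardIndependent (a ∘ e) := fun n hn =>
  ha (e n) (joinSpan_mono (image_subset_iff.2 fun _ hm => he hm) (joinSpan_comp_subset hn))

theorem ForwardIndependent.not_le_sup (hc : ForwardIndependent c) {i j k : ℕ} (hij : i < j)
    (hik : i < k) : ¬ c i ≤ c j ⊔ c k := fun hle =>
  hc i (isLowerSet_joinSpan hle (supClosed_joinSpan (mem_joinSpan hij) (mem_joinSpan hik)))

theorem IsSupConvex.comp (hc : IsSupConvex c) {e : ℕ → ℕ} (he : StrictMono e) :
    IsSupConvex (c ∘ e) := fun _ _ _ hpq hqr => hc (he hpq) (he hqr)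

theorem IsSupConvex.le_sup (hc : IsSupConvex c) {p q r : ℕ} (hpq : p ≤ q) (hqr : q ≤ r) :
    c q ≤ c p ⊔ c r := by
  rcases hpq.eq_or_lt with rfl | hpq
  · exact le_sup_left
  rcases hqr.eq_or_lt with rfl | hqr
  · exact le_sup_right
  exact hc hpq hqr

theorem JoinIndependent.exists_finset_embedding (ha : JoinIndependent a) :
    ∃ f : Finset ℕ → P, Function.Injective f ∧ ∀ A B, f (A ∪ B) = f A ⊔ f B := by
  -- the extra index `0` keeps the join nonempty at `A = ∅`
  let g : Finset ℕ → Finset ℕ := fun A => insert 0 (A.image Nat.succ)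
  have hg : ∀ A, (g A).Nonempty := fun A => Finset.insert_nonempty _ _
  refine ⟨fun A => (g A).sup' (hg A) a, fun A B hAB => ?_, fun A B => ?_⟩
  · have key : ∀ A B, (g A).sup' (hg A) a = (g B).sup' (hg B) a → A ⊆ B := by
      intro A B hAB n hnA
      by_contra hnB
      refine ha (n + 1) (isLowerSet_joinSpan ((Finset.le_sup' a ?_).trans hAB.le) ?_)
      · exact Finset.mem_insert_of_mem (Finset.mem_image_of_mem _ hnA)
      · refine supClosed_joinSpan.finsetSup'_mem (hg B) fun m hm => mem_joinSpan ?_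
        rintro rfl
        simp [g, hnB] at hm
    exact (key A B hAB).antisymm (key B A hAB.symm)
  · rw [← Finset.sup'_union (hg A) (hg B)]
    simp only [g, Finset.image_union, Finset.insert_union_distrib]

theorem ForwardIndependent.strictAnti_sup_succ (hc : ForwardIndependent c)
    (h : ∀ k, c (k + 2) ≤ c k ⊔ c (k + 1)) : StrictAnti fun k => c k ⊔ c (k + 1) :=
  strictAnti_nat_of_succ_lt fun k => lt_of_le_of_ne (sup_le le_sup_right (h k)) fun heq =>
    hc.not_le_sup (i := k) (j := k + 1) (k := k + 2) (by omega) (by omega)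
      (le_sup_left.trans_eq heq.symm)

theorem IsSupConvex.exists_omegaStar_embedding_of_not_le_sup (hc : IsSupConvex c)
    (hind : ForwardIndependent c)
    (hgap : ∀ ⦃i j k⦄, i < j → j < k → ¬ c k ≤ c i ⊔ c j) :
    ∃ f : OmegaStar → P, Function.Injective f ∧ ∀ p q, f (omegaJoin p q) = f p ⊔ f q := by
  let f : OmegaStar → P := fun p => c p.1.1 ⊔ c p.1.2
  have fst_le : ∀ p q, f p = f q → p.1.1 ≤ q.1.1 := fun p q hpq => not_lt.1 fun hlt =>
    hind.not_le_sup hlt (hlt.trans p.2) (le_sup_left.trans_eq hpq.symm : c q.1.1 ≤ f p)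
  have snd_le : ∀ p q, f p = f q → p.1.2 ≤ q.1.2 := fun p q hpq =>
    not_lt.1 fun hlt => hgap q.2 hlt (le_sup_right.trans_eq hpq : c p.1.2 ≤ f q)
  refine ⟨f, fun p q hpq => ?_, fun p q => ?_⟩
  · have h1 := (fst_le p q hpq).antisymm (fst_le q p hpq.symm)
    exact Subtype.ext (Prod.ext h1 ((snd_le p q hpq).antisymm (snd_le q p hpq.symm)))
  · have hmem : ∀ x, min p.1.1 q.1.1 ≤ x → x ≤ max p.1.2 q.1.2 → c x ≤ f (omegaJoin p q) :=
      fun x h1 h2 => hc.le_sup h1 h2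
    show c (min p.1.1 q.1.1) ⊔ c (max p.1.2 q.1.2) = f p ⊔ f q
    refine le_antisymm (sup_le ?_ ?_) (sup_le (sup_le ?_ ?_) (sup_le ?_ ?_))
    · rcases min_choice p.1.1 q.1.1 with h | h <;> rw [h]
      exacts [le_sup_of_le_left le_sup_left, le_sup_of_le_right le_sup_left]
    · rcases max_choice p.1.2 q.1.2 with h | h <;> rw [h]
      exacts [le_sup_of_le_left le_sup_right, le_sup_of_le_right le_sup_right]
    · exact hmem _ (min_le_left _ _) (p.2.le.trans (le_max_left _ _))
    · exact hmem _ ((min_le_left _ _).trans p.2.le) (le_max_left _ _)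
    · exact hmem _ (min_le_right _ _) (q.2.le.trans (le_max_right _ _))
    · exact hmem _ ((min_le_right _ _).trans q.2.le) (le_max_right _ _)

theorem IsSupConvex.exists_omegaStar_embedding (hc : IsSupConvex c) (hind : ForwardIndependent c)
    (hwf : WellFounded ((· < ·) : P → P → Prop)) :
    ∃ f : OmegaStar → P, Function.Injective f ∧ ∀ p q, f (omegaJoin p q) = f p ⊔ f q := by
  have : WellFoundedLT P := ⟨hwf⟩
  obtain ⟨e, he, hle | hnle⟩ := exists_strictMono_homogeneous_triples fun i j k => c k ≤ c i ⊔ c j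
  · exact absurd ((hind.comp he).strictAnti_sup_succ fun k => hle (by omega) (by omega))
      (not_strictAnti_of_wellFoundedLT _)
  · exact (hc.comp he).exists_omegaStar_embedding_of_not_le_sup (hind.comp he) hnle

end Sequences

section Traps

variable {P : Type*} [SemilatticeSup P] {a : ℕ → P}

def IsTrap (a : ℕ → P) (Y : Finset ℕ) (R : Set ℕ) : Prop :=
  (∀ y ∈ Y, ∀ r ∈ R, y < r) ∧ R.Infinite ∧
    ∀ x ∈ R, ∀ R' ⊆ R ∩ Ioi x, R'.Infinite → a x ∈ joinSpan a (↑Y ∪ R')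

/-- A stage of the greedy search for an independent subsequence, with chosen indices `X` and
the reservoir `R` of candidates for the later ones. -/
def IsGreedyStage (a : ℕ → P) (X : Finset ℕ) (R : Set ℕ) : Prop :=
  (∀ y ∈ X, ∀ r ∈ R, y < r) ∧ R.Infinite ∧ ∀ q ∈ X, a q ∉ joinSpan a ((↑X \ {q}) ∪ R)

theorem IsGreedyStage.exists_extend {X : Finset ℕ} {R : Set ℕ} (hS : IsGreedyStage a X R)
    (hT : ¬ IsTrap a X R) : ∃ x ∈ R, ∃ R' ⊆ R ∩ Ioi x, IsGreedyStage a (insert x X) R' := by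
  obtain ⟨hXR, hRinf, hind⟩ := hS
  simp only [IsTrap, not_and, not_forall] at hT
  obtain ⟨x, hx, R', hR', hR'inf, hxR'⟩ := hT hXR hRinf
  refine ⟨x, hx, R', hR', ?_, hR'inf, ?_⟩
  · simp only [Finset.mem_insert, forall_eq_or_imp]
    exact ⟨fun r hr => (hR' hr).2, fun y hy r hr => hXR y hy r (hR' hr).1⟩
  · simp only [Finset.mem_insert, forall_eq_or_imp, Finset.coe_insert]
    refine ⟨fun hmem => hxR' (joinSpan_mono ?_ hmem), fun q hq hmem => hind q hq
      (joinSpan_mono ?_ hmem)⟩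
    · rintro y (⟨rfl | hy, hyx⟩ | hy)
      exacts [absurd rfl hyx, Or.inl hy, Or.inr hy]
    · rintro y (⟨rfl | hy, hyq⟩ | hy)
      exacts [Or.inr hx, Or.inl ⟨hy, hyq⟩, Or.inr (hR' hy).1]

theorem exists_isTrap (h : ∀ e : ℕ → ℕ, StrictMono e → ¬ JoinIndependent (a ∘ e))
    {R₀ : Set ℕ} (hR₀ : R₀.Infinite) :
    ∃ (Y : Finset ℕ) (R : Set ℕ), ↑Y ⊆ R₀ ∧ R ⊆ R₀ ∧ IsTrap a Y R := by
  by_contra! hno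
  let σ := {s : Finset ℕ × Set ℕ // ↑s.1 ⊆ R₀ ∧ s.2 ⊆ R₀ ∧ IsGreedyStage a s.1 s.2}
  have : Nonempty σ := ⟨⟨(∅, R₀), by simp [IsGreedyStage, hR₀]⟩⟩
  obtain ⟨f, hf⟩ := exists_seq_forall_rel_succ
    (r := fun s t : σ => ∃ x ∈ s.1.2, t.1.1 = insert x s.1.1 ∧ t.1.2 ⊆ s.1.2 ∩ Ioi x)
    fun ⟨(X, R), hX, hR, hS⟩ => by
      obtain ⟨x, hx, R', hR', hS'⟩ := hS.exists_extend (hno X R hX hR)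
      exact ⟨⟨(insert x X, R'), by simpa using insert_subset (hR hx) hX,
        fun r hr => hR (hR' hr).1, hS'⟩, x, hx, rfl, hR'⟩
  choose xs hxsR hX hR using hf
  have hXmono : Monotone fun n => (f n).1.1 :=
    monotone_nat_of_le_succ fun n => by simp only [hX n, Finset.subset_insert]
  have hxsX : ∀ ⦃k n⦄, k < n → xs k ∈ (f n).1.1 := fun k n hkn => by
    refine hXmono (Nat.succ_le_of_lt hkn) ?_
    simp only [hX k, Finset.mem_insert_self]
  have hxs : StrictMono xs := strictMono_nat_of_lt_succ fun n => (hR n (hxsR (n + 1))).2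
  refine h xs hxs fun i hi => ?_
  have hcover : xs '' {i}ᶜ ⊆ ⋃ n, ↑(f n).1.1 \ {xs i} := by
    rintro _ ⟨j, hji, rfl⟩
    exact mem_iUnion.2 ⟨j + 1, hxsX j.lt_succ_self, hxs.injective.ne hji⟩
  obtain ⟨n, hn, hin⟩ := ((eventually_mem_joinSpan_of_mem_iUnion
    (fun m n hmn => sdiff_subset_sdiff_left (Finset.coe_subset.2 (hXmono hmn)))
    (joinSpan_mono hcover (joinSpan_comp_subset hi))).and (Filter.eventually_gt_atTop i)).exists
  exact (f n).2.2.2.2.2 (xs i) (hxsX hin) (joinSpan_mono subset_union_left hn)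

theorem IsTrap.nonempty (ha : ForwardIndependent a) {Y : Finset ℕ} {R : Set ℕ}
    (hT : IsTrap a Y R) : Y.Nonempty := by
  rw [Finset.nonempty_iff_ne_empty]
  rintro rfl
  obtain ⟨x, hx⟩ := hT.2.1.nonempty
  exact ha x (joinSpan_mono (by simp) (hT.2.2 x hx _ subset_rfl (hT.2.1.inter_Ioi x)))

structure TrapSeq (a : ℕ → P) where
  Y : ℕ → Finset ℕ
  R : ℕ → Set ℕ
  isTrap : ∀ t, IsTrap a (Y t) (R t)
  Y_nonempty : ∀ t, (Y t).Nonempty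
  Y_succ_subset : ∀ t, ↑(Y (t + 1)) ⊆ R t
  R_succ_subset : ∀ t, R (t + 1) ⊆ R t

theorem exists_trapSeq (ha : ForwardIndependent a)
    (h : ∀ e : ℕ → ℕ, StrictMono e → ¬ JoinIndependent (a ∘ e)) : Nonempty (TrapSeq a) := by
  let σ := {s : Finset ℕ × Set ℕ // IsTrap a s.1 s.2}
  have : Nonempty σ := by
    obtain ⟨Y, R, -, -, hT⟩ := exists_isTrap h infinite_univ
    exact ⟨⟨(Y, R), hT⟩⟩
  obtain ⟨f, hf⟩ := exists_seq_forall_rel_succ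
    (r := fun s t : σ => ↑t.1.1 ⊆ s.1.2 ∧ t.1.2 ⊆ s.1.2) fun s => by
      obtain ⟨Y, R, hY, hR, hT⟩ := exists_isTrap h s.2.2.1
      exact ⟨⟨(Y, R), hT⟩, hY, hR⟩
  exact ⟨⟨fun t => (f t).1.1, fun t => (f t).1.2, fun t => (f t).2,
    fun t => (f t).2.nonempty ha, fun t => (hf t).1, fun t => (hf t).2⟩⟩

namespace TrapSeq

variable (T : TrapSeq a)

theorem Y_subset_R {t t' : ℕ} (h : t < t') : ↑(T.Y t') ⊆ T.R t := by
  obtain ⟨k, rfl⟩ := Nat.exists_eq_add_of_lt h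
  exact (T.Y_succ_subset (t + k)).trans (antitone_nat_of_succ_le T.R_succ_subset (by omega))

theorem lt_of_mem {t t' y y' : ℕ} (h : t < t') (hy : y ∈ T.Y t) (hy' : y' ∈ T.Y t') : y < y' :=
  (T.isTrap t).1 y hy y' (T.Y_subset_R h hy')

theorem infinite_tail (r : ℕ) : (⋃ t ∈ Ici r, (T.Y t : Set ℕ)).Infinite := by
  choose y hy using T.Y_nonempty
  have hmono : StrictMono y := fun t t' h => T.lt_of_mem h (hy t) (hy t')
  exact infinite_of_injective_forall_mem (f := fun k => y (r + k))
    (hmono.injective.comp (add_right_injective r))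
    fun k => mem_biUnion (show r + k ∈ Ici r by simp) (hy _)

theorem mem_joinSpan_tail {l m r x : ℕ} (hlm : l < m) (hmr : m < r) (hx : x ∈ T.Y m) :
    a x ∈ joinSpan a (↑(T.Y l) ∪ ⋃ t ∈ Ici r, ↑(T.Y t)) := by
  refine (T.isTrap l).2.2 x (T.Y_subset_R hlm hx) _ (fun z hz => ?_) (T.infinite_tail r)
  obtain ⟨t, ht, hz⟩ := mem_iUnion₂.1 hz
  exact ⟨T.Y_subset_R (hlm.trans (hmr.trans_le ht)) hz, T.lt_of_mem (hmr.trans_le ht) hx hz⟩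

theorem eventually_mem_joinSpan_Icc {l m r x : ℕ} (hlm : l < m) (hmr : m < r)
    (hx : x ∈ T.Y m) :
    ∀ᶠ b in Filter.atTop, a x ∈ joinSpan a (↑(T.Y l) ∪ ⋃ t ∈ Icc r b, ↑(T.Y t)) := by
  refine eventually_mem_joinSpan_of_mem_iUnion (fun b b' h =>
      union_subset_union_right _ (biUnion_subset_biUnion_left (Icc_subset_Icc_right h)))
    (joinSpan_mono ?_ (T.mem_joinSpan_tail hlm hmr hx))
  rintro z (hz | hz)
  · exact mem_iUnion.2 ⟨0, Or.inl hz⟩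
  · obtain ⟨t, ht, hz⟩ := mem_iUnion₂.1 hz
    exact mem_iUnion.2 ⟨t, Or.inr (mem_iUnion₂.2 ⟨t, ⟨ht, le_rfl⟩, hz⟩)⟩

theorem exists_bound (r : ℕ) : ∃ b, r ≤ b ∧ ∀ l m, l < m → m < r → ∀ x ∈ T.Y m,
    a x ∈ joinSpan a (↑(T.Y l) ∪ ⋃ t ∈ Icc r b, ↑(T.Y t)) := by
  have hall : ∀ᶠ b in Filter.atTop, ∀ l ∈ Finset.range r, ∀ m ∈ Finset.range r, l < m →
      ∀ x ∈ T.Y m, a x ∈ joinSpan a (↑(T.Y l) ∪ ⋃ t ∈ Icc r b, ↑(T.Y t)) := by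
    simp only [Filter.eventually_all_finset, Filter.eventually_imp_distrib_left]
    exact fun l _ m hm hlm x hx => T.eventually_mem_joinSpan_Icc hlm (Finset.mem_range.1 hm) hx
  obtain ⟨b, hrb, hb⟩ := ((Filter.eventually_ge_atTop r).and hall).exists
  exact ⟨b, hrb, fun l m hlm hmr => hb l (Finset.mem_range.2 (hlm.trans hmr)) m
    (Finset.mem_range.2 hmr) hlm⟩

noncomputable def bound (r : ℕ) : ℕ := (T.exists_bound r).choose

/-- `cut (s + 1)` is chosen so that the trap relations among the `Y t` with `t ≤ cut s` are
all witnessed inside `block s`. -/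
noncomputable def cut : ℕ → ℕ
  | 0 => 0
  | s + 1 => T.bound (cut s + 1)

theorem cut_succ (s : ℕ) : T.cut (s + 1) = T.bound (T.cut s + 1) := rfl

theorem cut_lt_succ (s : ℕ) : T.cut s < T.cut (s + 1) :=
  T.cut_succ s ▸ (T.exists_bound (T.cut s + 1)).choose_spec.1

theorem cut_strictMono : StrictMono T.cut := strictMono_nat_of_lt_succ T.cut_lt_succ

noncomputable def block (s : ℕ) : Finset ℕ :=
  (Finset.Icc (T.cut s + 1) (T.cut (s + 1))).biUnion T.Y

theorem Y_subset_block (s : ℕ) : T.Y (T.cut s + 1) ⊆ T.block s :=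
  Finset.subset_biUnion_of_mem T.Y (Finset.mem_Icc.2 ⟨le_rfl, T.cut_lt_succ s⟩)

theorem mem_block {s x : ℕ} :
    x ∈ T.block s ↔ ∃ t, T.cut s < t ∧ t ≤ T.cut (s + 1) ∧ x ∈ T.Y t := by
  simp [block, and_assoc]

theorem lt_of_mem_block {s s' x x' : ℕ} (h : s < s') (hx : x ∈ T.block s)
    (hx' : x' ∈ T.block s') : x < x' := by
  obtain ⟨t, -, ht, hx⟩ := T.mem_block.1 hx
  obtain ⟨t', ht', -, hx'⟩ := T.mem_block.1 hx'
  exact T.lt_of_mem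
    (ht.trans_lt ((T.cut_strictMono.monotone (Nat.succ_le_of_lt h)).trans_lt ht')) hx hx'

noncomputable def blockSup (s : ℕ) : P :=
  (T.block s).sup' ((T.Y_nonempty _).mono (T.Y_subset_block s)) a

theorem forwardIndependent_blockSup (ha : ForwardIndependent a) :
    ForwardIndependent T.blockSup := by
  intro n hn
  obtain ⟨x, hx⟩ := (T.Y_nonempty _).mono (T.Y_subset_block n)
  refine ha x (isLowerSet_joinSpan (Finset.le_sup' a hx) (joinSpan_subset_joinSpan
    (fun s hs => ?_) hn))
  exact supClosed_joinSpan.finsetSup'_mem _ fun y hy => mem_joinSpan (T.lt_of_mem_block hs hx hy)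

theorem mem_joinSpan_block {l m s x : ℕ} (hlm : l < m) (hms : m ≤ T.cut s) (hx : x ∈ T.Y m) :
    a x ∈ joinSpan a (↑(T.Y l) ∪ ↑(T.block s)) := by
  refine joinSpan_mono (union_subset_union_right _ (subset_of_eq ?_))
    ((T.exists_bound (T.cut s + 1)).choose_spec.2 l m hlm (Nat.lt_succ_of_le hms) x hx)
  simp only [block, Finset.coe_biUnion, Finset.coe_Icc, T.cut_succ, bound]

theorem isSupConvex_blockSup : IsSupConvex T.blockSup := by
  intro p q r hpq hqr
  rw [blockSup, blockSup, blockSup, ← Finset.sup'_union]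
  refine le_sup'_of_mem_joinSpan _ (supClosed_joinSpan.finsetSup'_mem _ fun x hx => ?_)
  obtain ⟨m, hm1, hm2, hxm⟩ := T.mem_block.1 hx
  have hlm : T.cut p + 1 < m := by
    have := T.cut_strictMono hpq
    omega
  have hmr : m ≤ T.cut r := hm2.trans (T.cut_strictMono.monotone (Nat.succ_le_of_lt hqr))
  rw [Finset.coe_union]
  exact joinSpan_mono (union_subset_union_left _ (Finset.coe_subset.2 (T.Y_subset_block p)))
    (T.mem_joinSpan_block hlm hmr hxm)

end TrapSeq

theorem exists_forwardIndependent_isSupConvex (ha : ForwardIndependent a)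
    (h : ∀ e : ℕ → ℕ, StrictMono e → ¬ JoinIndependent (a ∘ e)) :
    ∃ c : ℕ → P, ForwardIndependent c ∧ IsSupConvex c :=
  let ⟨T⟩ := exists_trapSeq ha h
  ⟨T.blockSup, T.forwardIndependent_blockSup ha, T.isSupConvex_blockSup⟩

end Traps

/-- For a join-semilattice `P`, the poset `J(P)` of ideals of `P` (ordered by
inclusion) is well-founded iff `P` is well-founded and neither `Ω(ω*)` nor `[ω]^{<ω}` embeds
into `P` as a join-subsemilattice. -/
theorem ideals_wellFounded_iff {P : Type*} [SemilatticeSup P] :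
    WellFounded (fun I J : {I : Set P // IsIdeal I} => I < J) ↔
      (WellFounded ((· < ·) : P → P → Prop) ∧
        (¬ ∃ f : OmegaStar → P, Function.Injective f ∧
            ∀ a b, f (omegaJoin a b) = f a ⊔ f b) ∧
        ¬ ∃ f : Finset ℕ → P, Function.Injective f ∧
            ∀ a b, f (a ∪ b) = f a ⊔ f b) := by
  refine ⟨fun hJ => ⟨wellFounded_lt_of_wellFounded_ideals hJ,
    fun ⟨_, hf, hop⟩ => not_wellFounded_ideals_of_omegaStar hf hop hJ,
    fun ⟨_, hf, hop⟩ => not_wellFounded_ideals_of_finset hf hop hJ⟩, ?_⟩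
  rintro ⟨hP, hΩ, hfin⟩
  rw [RelEmbedding.wellFounded_iff_isEmpty]
  refine ⟨fun g => ?_⟩
  obtain ⟨a, ha⟩ := exists_forwardIndependent_of_ssubset (fun n => (g n).2)
    fun n => g.map_rel_iff.2 n.lt_succ_self
  by_cases hind : ∃ e : ℕ → ℕ, StrictMono e ∧ JoinIndependent (a ∘ e)
  · obtain ⟨e, -, he⟩ := hind
    exact hfin he.exists_finset_embedding
  · obtain ⟨c, hc, hconv⟩ :=
      exists_forwardIndependent_isSupConvex ha fun e he hi => hind ⟨e, he, hi⟩
    exact hΩ (hconv.exists_omegaStar_embedding hc hP)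
end

section
/- Let P be a join-semilattice and let ι be an infinite set. The following are equivalent: (i) there is an injection g : ι → P whose image is an independent subset of P; (ii) the join-semilattice of finite subsets of ι (ordered by inclusion, with join given by union) embeds into P as a join-subsemilattice; (iii) there is an order-embedding of the poset of finite subsets of ι (ordered by inclusion) into P; (iv) there is an order-embedding of the powerset of ι (ordered by inclusion) into J(P). -/
open Set

/-!
For an independent family `g`, sending a finite set `s` to the join of the `g i`, `i ∈ s`, is
injective and join-preserving once one spare member of the family is added to every join (so that
`∅` has an image); an infinite `ι` absorbs the spare index. A join-preserving injection is an order
embedding. An order embedding `e` of the finite sets induces `A ↦ ⋃ {↓ e F | F ⊆ A finite}` on the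
powerset. Conversely, from `h : 𝒫 ι ↪o J(P)` pick `g i ∈ h {i} \ h {i}ᶜ`: every `g j` with `j ≠ i`
lies in the ideal `h {i}ᶜ`, which is closed under finite joins and misses `g i`.
-/

open Function

section Independence

variable {ι P : Type*} [SemilatticeSup P] {g : ι → P}

theorem indepSet_range_iff (hg : Injective g) :
    IndepSet (range g) ↔
      ∀ i (s : Finset ι) (hs : s.Nonempty), i ∉ s → ¬ g i ≤ s.sup' hs g := by
  classical
  constructor
  · intro hind i s hs his hle
    refine hind (g i) ⟨i, rfl⟩ (s.image g) (hs.image g) ?_ (by rwa [Finset.sup'_image])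
    rintro _ hx
    obtain ⟨j, hj, rfl⟩ := Finset.mem_image.mp hx
    exact ⟨⟨j, rfl⟩, fun hji => his (hg hji ▸ hj)⟩
  · rintro hind _ ⟨i, rfl⟩ F hF hFsub
    obtain ⟨s, -, rfl⟩ : ∃ s : Finset ι, ↑s ⊆ (univ : Set ι) ∧ s.image g = F :=
      Finset.subset_set_image_iff.mp (image_univ ▸ fun x hx => (hFsub hx).1)
    rw [Finset.sup'_image]
    exact hind i s hF.of_image fun his => (hFsub (Finset.mem_image_of_mem g his)).2 rfl

theorem mem_of_le_sup'_of_indepSet_range (hg : Injective g) (hind : IndepSet (range g))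
    {s : Finset ι} (hs : s.Nonempty) {i : ι} (hle : g i ≤ s.sup' hs g) : i ∈ s :=
  not_not.mp fun his => (indepSet_range_iff hg).mp hind i s hs his hle

end Independence

section JoinEmbedding

variable {α β : Type*} [SemilatticeSup α] [SemilatticeSup β]

theorem le_iff_le_of_injective_of_map_sup {f : α → β} (hinj : Injective f)
    (hsup : ∀ a b, f (a ⊔ b) = f a ⊔ f b) {a b : α} : f a ≤ f b ↔ a ≤ b := by
  rw [← sup_eq_right, ← hsup, hinj.eq_iff, sup_eq_right]

variable {ι P : Type*} [SemilatticeSup P]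

def optionSup' (g : Option ι → P) (s : Finset ι) : P :=
  s.insertNone.sup' Finset.insertNone_nonempty g

theorem insertNone_union [DecidableEq ι] (s t : Finset ι) :
    (s ∪ t).insertNone = s.insertNone ∪ t.insertNone := by
  ext (_ | i) <;> simp

theorem optionSup'_union [DecidableEq ι] (g : Option ι → P) (s t : Finset ι) :
    optionSup' g (s ∪ t) = optionSup' g s ⊔ optionSup' g t := by
  unfold optionSup'
  rw [← Finset.sup'_union]
  exact Finset.sup'_congr _ (insertNone_union s t) fun _ _ => rfl

theorem optionSup'_le_optionSup'_iff {g : Option ι → P} (hg : Injective g)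
    (hind : IndepSet (range g)) {s t : Finset ι} : optionSup' g s ≤ optionSup' g t ↔ s ⊆ t := by
  refine ⟨fun hst i hi => ?_, fun hst => Finset.sup'_mono g (Finset.insertNone.monotone hst) _⟩
  have hle : g (some i) ≤ optionSup' g t :=
    (Finset.le_sup' g (Finset.some_mem_insertNone.mpr hi)).trans hst
  exact Finset.some_mem_insertNone.mp (mem_of_le_sup'_of_indepSet_range hg hind _ hle)

theorem exists_injective_map_union_of_indepSet [DecidableEq ι] [Infinite ι] {g : ι → P}
    (hg : Injective g) (hind : IndepSet (range g)) :
    ∃ f : Finset ι → P, Injective f ∧ ∀ a b, f (a ∪ b) = f a ⊔ f b := by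
  obtain ⟨e⟩ : Nonempty (Option ι ≃ ι) := by
    rw [← Cardinal.eq, Cardinal.mk_option, Cardinal.add_one_eq (Cardinal.aleph0_le_mk ι)]
  have hge : Injective (g ∘ e) := hg.comp e.injective
  have hinde : IndepSet (range (g ∘ e)) := by rwa [range_comp, e.range_eq_univ, image_univ]
  refine ⟨optionSup' (g ∘ e), fun s t hst => ?_, optionSup'_union _⟩
  exact (optionSup'_le_optionSup'_iff hge hinde).mp hst.le |>.antisymm
    ((optionSup'_le_optionSup'_iff hge hinde).mp hst.ge)

end JoinEmbedding

section Ideals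

theorem IsIdeal.sup_mem {P : Type*} [SemilatticeSup P] {I : Set P} (hI : IsIdeal I) {x y : P}
    (hx : x ∈ I) (hy : y ∈ I) : x ⊔ y ∈ I := by
  obtain ⟨z, hz, hxz, hyz⟩ := hI.2.1 x hx y hy
  exact hI.2.2 _ z (sup_le hxz hyz) hz

variable {ι P : Type*} [Preorder P]

def finsetIdeal (e : Finset ι → P) (A : Set ι) : Set P :=
  {x | ∃ F : Finset ι, ↑F ⊆ A ∧ x ≤ e F}

theorem isIdeal_finsetIdeal [DecidableEq ι] {e : Finset ι → P} (he : Monotone e) (A : Set ι) :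
    IsIdeal (finsetIdeal e A) := by
  refine ⟨⟨e ∅, ∅, by simp, le_rfl⟩, ?_, fun x y hxy ⟨F, hF, hyF⟩ => ⟨F, hF, hxy.trans hyF⟩⟩
  rintro x ⟨F, hF, hxF⟩ y ⟨G, hG, hyG⟩
  exact ⟨e (F ∪ G), ⟨F ∪ G, by simpa using union_subset hF hG, le_rfl⟩,
    hxF.trans (he Finset.subset_union_left), hyG.trans (he Finset.subset_union_right)⟩

theorem finsetIdeal_subset_finsetIdeal_iff (e : Finset ι ↪o P) {A B : Set ι} :
    finsetIdeal e A ⊆ finsetIdeal e B ↔ A ⊆ B := by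
  refine ⟨fun h i hi => ?_, fun h x ⟨F, hF, hxF⟩ => ⟨F, hF.trans h, hxF⟩⟩
  obtain ⟨G, hG, hiG⟩ := h ⟨{i}, by simpa using hi, le_rfl⟩
  exact hG (e.le_iff_le.mp hiG (Finset.mem_singleton_self i))

def finsetIdealEmbedding [DecidableEq ι] (e : Finset ι ↪o P) :
    Set ι ↪o {I : Set P // IsIdeal I} :=
  OrderEmbedding.ofMapLEIff (fun A => ⟨finsetIdeal e A, isIdeal_finsetIdeal e.monotone A⟩)
    fun _ _ => finsetIdeal_subset_finsetIdeal_iff e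

end Ideals

theorem exists_indepSet_range_of_orderEmbedding {ι P : Type*} [SemilatticeSup P]
    (h : Set ι ↪o {I : Set P // IsIdeal I}) : ∃ g : ι → P, Injective g ∧ IndepSet (range g) := by
  have hsep : ∀ i, ∃ x ∈ (h {i}).1, x ∉ (h {i}ᶜ).1 := fun i =>
    not_subset.mp fun hsub => (h.le_iff_le.mp hsub : ({i} : Set ι) ⊆ {i}ᶜ) rfl rfl
  choose g hg hg' using hsep
  have hmem : ∀ {i j}, j ≠ i → g j ∈ (h {i}ᶜ).1 := fun hji =>
    h.le_iff_le.mpr (singleton_subset_iff.mpr hji) (hg _)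
  have hinj : Injective g := fun i j hij =>
    not_not.mp fun hne => hg' j (hij ▸ hmem hne)
  refine ⟨g, hinj, (indepSet_range_iff hinj).mpr fun i s hs his hle => hg' i ?_⟩
  have hI := (h {i}ᶜ).2
  exact hI.2.2 _ _ hle <| Finset.sup'_mem _ (fun _ hx _ hy => hI.sup_mem hx hy) s hs g
    fun j hj => hmem (ne_of_mem_of_not_mem hj his)

/-- For a join-semilattice `P` and an infinite set `ι`, the following are
equivalent: (i) there is an injection `ι → P` with independent image; (ii) the join-semilattice
of finite subsets of `ι` embeds into `P` as a join-subsemilattice; (iii) the poset of finite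
subsets of `ι` order-embeds into `P`; (iv) the powerset of `ι` order-embeds into `J(P)`. -/
theorem independent_tfae {P : Type*} [SemilatticeSup P] (ι : Type*) [Infinite ι]
    [DecidableEq ι] :
    List.TFAE [
      ∃ g : ι → P, Function.Injective g ∧ IndepSet (Set.range g),
      ∃ f : Finset ι → P, Function.Injective f ∧ ∀ a b, f (a ∪ b) = f a ⊔ f b,
      Nonempty (Finset ι ↪o P),
      Nonempty (Set ι ↪o {I : Set P // IsIdeal I})] := by
  tfae_have 1 → 2 := fun ⟨g, hg, hind⟩ => exists_injective_map_union_of_indepSet hg hind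
  tfae_have 2 → 3 := fun ⟨f, hinj, hunion⟩ =>
    ⟨OrderEmbedding.ofMapLEIff f fun _ _ => le_iff_le_of_injective_of_map_sup hinj hunion⟩
  tfae_have 3 → 4 := fun ⟨e⟩ => ⟨finsetIdealEmbedding e⟩
  tfae_have 4 → 1 := fun ⟨h⟩ => exists_indepSet_range_of_orderEmbedding h
  tfae_finish
end

section
/- For a join-semilattice P, the following are equivalent: (i) P is well-founded and has no infinite antichain (i.e. P is wqo); (ii) P contains no infinite independent subset and there exist a well-founded poset Q and an embedding of P into I_{<ω}(Q) as a join-subsemilattice. -/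
open Set

universe u

/-!
A wqo join-semilattice `P` embeds into the finitely generated initial segments of its poset of
ideals via `p ↦ {I | p ∉ I}`: in a wqo every lower set, in particular `{x | ¬ p ≤ x}`, is a finite
union of ideals, and an ideal contained in a finite union of lower sets lies in one of them, while
ideals are closed under `⊔`. Conversely, `I_{<ω}(Q)` is well-founded when `Q` is (compare antichains
of generators in the Dershowitz–Manna order), hence so is `P`. An infinite antichain of `P` gives
pairwise incomparable finitely generated downsets of `Q`; a pigeonhole extraction followed by a
minimality argument in `I_{<ω}(Q)` selects infinitely many of them that each own a point lying in
none of the others, and their preimages form an infinite independent set.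
-/

section FinGenInit

variable {Q : Type*} [Preorder Q]

theorem isLowerSet_of_mem_finGenInit {D : Set Q} (hD : D ∈ FinGenInit Q) : IsLowerSet D := by
  obtain ⟨F, rfl⟩ := hD
  rintro x y hyx ⟨z, hz, hxz⟩
  exact ⟨z, hz, hyx.trans hxz⟩

theorem biUnion_mem_finGenInit {ι : Type*} {U : ι → Set Q} (hU : ∀ i, U i ∈ FinGenInit Q)
    (S : Finset ι) : (⋃ i ∈ S, U i) ∈ FinGenInit Q := by
  classical
  choose F hF using hU
  refine ⟨S.biUnion F, ?_⟩
  ext x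
  simp only [hF, mem_iUnion, mem_ofPred_eq, Finset.mem_biUnion, exists_prop]
  grind

theorem preimage_val_mem_finGenInit {s : Set Q} (hs : IsUpperSet s) {D : Set Q}
    (hD : D ∈ FinGenInit Q) : ((↑) : s → Q) ⁻¹' D ∈ FinGenInit s := by
  classical
  obtain ⟨F, rfl⟩ := hD
  refine ⟨F.subtype (· ∈ s), ?_⟩
  ext x
  constructor
  · rintro ⟨y, hy, hxy⟩
    exact ⟨⟨y, hs hxy x.2⟩, Finset.mem_subtype.2 hy, hxy⟩
  · rintro ⟨y, hy, hxy⟩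
    exact ⟨y, Finset.mem_subtype.1 hy, hxy⟩

theorem exists_antichain_generator {D : Set Q} (hD : D ∈ FinGenInit Q) :
    ∃ F : Finset Q, D = {x | ∃ y ∈ F, x ≤ y} ∧ ∀ y ∈ F, ∀ z ∈ F, ¬ y < z := by
  classical
  obtain ⟨F, rfl⟩ := hD
  refine ⟨F.filter (Maximal (· ∈ F)), ?_, fun y hy z hz => (Finset.mem_filter.1 hy).2.not_gt
    (Finset.mem_filter.1 hz).1⟩
  ext x
  constructor
  · rintro ⟨y, hy, hxy⟩
    obtain ⟨z, hyz, hz⟩ := F.exists_le_maximal hy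
    exact ⟨z, Finset.mem_filter.2 ⟨hz.prop, hz⟩, hxy.trans hyz⟩
  · rintro ⟨y, hy, hxy⟩
    exact ⟨y, (Finset.mem_filter.1 hy).1, hxy⟩

end FinGenInit

section WellFounded

variable {Q : Type*} [PartialOrder Q]

theorem isDershowitzMannaLT_of_ssubset {F G : Finset Q} (hF : ∀ y ∈ F, ∀ z ∈ F, ¬ y < z)
    (hFG : {x | ∃ y ∈ F, x ≤ y} ⊂ {x | ∃ y ∈ G, x ≤ y}) :
    Multiset.IsDershowitzMannaLT F.val G.val := by
  classical
  refine ⟨(F ∩ G).val, (F \ G).val, (G \ F).val, ?_, ?_, ?_, ?_⟩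
  · intro h
    have hGF : G ⊆ F := by simpa [tsub_eq_zero_iff_le] using h
    exact hFG.2 fun x ⟨y, hy, hxy⟩ => ⟨y, hGF hy, hxy⟩
  · rw [Finset.inter_val, Finset.sdiff_val, add_comm, Multiset.sub_add_inter]
  · rw [Finset.inter_comm, Finset.inter_val, Finset.sdiff_val, add_comm, Multiset.sub_add_inter]
  · intro y hy
    obtain ⟨hyF, hyG⟩ := Finset.mem_sdiff.1 (Finset.mem_def.2 hy)
    obtain ⟨z, hzG, hyz⟩ := hFG.1 ⟨y, hyF, le_rfl⟩
    have hlt : y < z := hyz.lt_of_ne fun h => hyG (h ▸ hzG)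
    exact ⟨z, Finset.mem_def.1 (Finset.mem_sdiff.2 ⟨hzG, fun hzF => hF y hyF z hzF hlt⟩), hlt⟩

theorem wellFoundedOn_finGenInit [WellFoundedLT Q] : (FinGenInit Q).WellFoundedOn (· < ·) := by
  choose F hF hanti using fun D : FinGenInit Q => exists_antichain_generator D.2
  refine Subrelation.wf (fun {D E} h => ?_)
    (InvImage.wf (fun D => (F D).val) Multiset.wellFounded_isDershowitzMannaLT)
  refine isDershowitzMannaLT_of_ssubset (hanti D) ?_
  rw [← hF, ← hF]
  exact h

end WellFounded

section PrivatePoints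

variable {Q ι : Type*}

theorem exists_seq_mem_notMem_of_pairwise_not_subset [Preorder Q] [Infinite ι] {U : ι → Set Q}
    (hU : ∀ i, U i ∈ FinGenInit Q) (hinc : Pairwise fun i j => ¬ U i ⊆ U j) :
    ∃ (n : ℕ → ι) (w : ℕ → Q), ∀ r, w r ∈ U (n r) ∧ ∀ s, r < s → w r ∉ U (n s) := by
  classical
  have pigeon : ∀ T : {T : Set ι // T.Infinite},
      ∃ i ∈ T.1, ∃ x ∈ U i, {j ∈ T.1 | j ≠ i ∧ x ∉ U j}.Infinite := by
    rintro ⟨T, hT⟩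
    obtain ⟨i, hi⟩ := hT.nonempty
    obtain ⟨F, hF⟩ := hU i
    have hcover : T \ {i} ⊆ ⋃ y ∈ F, {j ∈ T | j ≠ i ∧ y ∉ U j} := by
      rintro j ⟨hj, hji⟩
      obtain ⟨x, hxi, hxj⟩ := not_subset.1 (hinc (Ne.symm hji))
      rw [hF] at hxi
      obtain ⟨y, hy, hxy⟩ := hxi
      exact mem_biUnion hy ⟨hj, hji, fun hyj => hxj (isLowerSet_of_mem_finGenInit (hU j) hxy hyj)⟩
    obtain ⟨y, hy, hinf⟩ : ∃ y ∈ F, {j ∈ T | j ≠ i ∧ y ∉ U j}.Infinite := by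
      by_contra! h
      exact (hT.sdiff (finite_singleton i)) ((F.finite_toSet.biUnion h).subset hcover)
    exact ⟨i, hi, y, hF ▸ ⟨y, hy, le_rfl⟩, hinf⟩
  choose i hi x hx hinf using pigeon
  let T : ℕ → {T : Set ι // T.Infinite} := fun k => (fun T => ⟨_, hinf T⟩)^[k] ⟨univ, infinite_univ⟩
  have hT_succ : ∀ k, (T (k + 1)).1 = {j ∈ (T k).1 | j ≠ i (T k) ∧ x (T k) ∉ U j} := fun k => by
    simp only [T, Function.iterate_succ_apply']
  have hT_anti : Antitone fun k => (T k).1 :=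
    antitone_nat_of_succ_le fun k => (hT_succ k).symm ▸ sep_subset _ _
  refine ⟨fun k => i (T k), fun k => x (T k), fun r => ⟨hx _, fun s hrs => ?_⟩⟩
  have hs : i (T s) ∈ (T (r + 1)).1 := hT_anti (Nat.succ_le_of_lt hrs) (hi (T s))
  rw [hT_succ] at hs
  exact hs.2.2

theorem exists_infinite_forall_not_subset_biUnion [PartialOrder Q] [WellFoundedLT Q] [Infinite ι]
    {U : ι → Set Q} (hU : ∀ i, U i ∈ FinGenInit Q) (hne : ∀ i, (U i).Nonempty)
    (hfin : ∀ x, {i | x ∈ U i}.Finite) :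
    ∃ R : Set ι, R.Infinite ∧
      ∀ (S : Finset R) (T : Set R), T.Infinite → ∃ i ∈ T, ¬ U i ⊆ ⋃ j ∈ S, U j := by
  set G := {D ∈ FinGenInit Q | {i | U i ⊆ D}.Infinite}
  have mem_G : ∀ {R : Set ι} (S : Finset R) (T : Set R), T.Infinite →
      (∀ i ∈ T, U i ⊆ ⋃ j ∈ S, U j) → (⋃ j ∈ S, U j) ∈ G := fun {R} S T hT h =>
    ⟨biUnion_mem_finGenInit (U := fun j : R => U j) (fun j => hU j) S,
      (hT.image Subtype.val_injective.injOn).mono (by rintro _ ⟨i, hi, rfl⟩; exact h i hi)⟩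
  rcases G.eq_empty_or_nonempty with hG | hG
  · refine ⟨univ, infinite_univ, fun S T hT => ?_⟩
    by_contra! h
    exact hG.subset (mem_G S T hT h)
  · -- With `D₀` minimal in `G` and `w` in a member below `D₀`, let `R` be the members below `D₀`
    -- missing `w`. A finite union of members of `R` covering infinitely many members of `R` lies
    -- in `G` and below `D₀`, so it contains `D₀ ∋ w`: impossible.
    obtain ⟨D₀, hD₀, hmin⟩ := (wellFoundedOn_finGenInit.subset (sep_subset _ _)).exists_minimal hG
    obtain ⟨i₀, hi₀⟩ := hD₀.2.nonempty
    obtain ⟨w, hw⟩ := hne i₀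
    refine ⟨{i | U i ⊆ D₀} \ {i | w ∈ U i}, hD₀.2.sdiff (hfin w), fun S T hT => ?_⟩
    by_contra! h
    have hD₀_sub := hmin (mem_G S T hT h) (iUnion₂_subset fun j _ => j.2.1)
    obtain ⟨j, -, hj⟩ := mem_iUnion₂.1 (hD₀_sub (hi₀ hw))
    exact j.2.2 hj

theorem exists_private_points_of_pointFinite [Infinite ι] {U : ι → Set Q}
    (hfin : ∀ x, {i | x ∈ U i}.Finite)
    (hcov : ∀ (S : Finset ι) (T : Set ι), T.Infinite → ∃ i ∈ T, ¬ U i ⊆ ⋃ j ∈ S, U j) :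
    ∃ (σ : ℕ → ι) (ρ : ℕ → Q), ∀ k, ρ k ∈ U (σ k) ∧ ∀ l ≠ k, ρ k ∉ U (σ l) := by
  classical
  let avoid (C : Finset (ι × Q)) : Set ι := {l | ∀ p ∈ C, l ≠ p.1 ∧ p.2 ∉ U l}
  have havoid : ∀ C, (avoid C).Infinite := fun C =>
    ((C.finite_toSet.biUnion fun p _ => (hfin p.2).insert p.1).infinite_compl).mono
      fun l (hl : l ∉ ⋃ p ∈ C, insert p.1 {i | p.2 ∈ U i}) p hp =>
        ⟨fun h => hl (mem_iUnion₂.2 ⟨p, hp, Or.inl h⟩),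
          fun h => hl (mem_iUnion₂.2 ⟨p, hp, Or.inr h⟩)⟩
  have hnext : ∀ C : Finset (ι × Q),
      ∃ p : ι × Q, p.1 ∈ avoid C ∧ p.2 ∈ U p.1 ∧ ∀ q ∈ C, p.2 ∉ U q.1 := by
    intro C
    obtain ⟨i, hi, hsub⟩ := hcov (C.image Prod.fst) (avoid C) (havoid C)
    obtain ⟨x, hx, hxS⟩ := not_subset.1 hsub
    exact ⟨(i, x), hi, hx, fun q hq hxq =>
      hxS (mem_iUnion₂.2 ⟨q.1, Finset.mem_image_of_mem _ hq, hxq⟩)⟩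
  choose next hnext_avoid hnext_mem hnext_new using hnext
  let C : ℕ → Finset (ι × Q) := fun k => Nat.rec ∅ (fun _ C => insert (next C) C) k
  have hC : ∀ {j k}, j < k → next (C j) ∈ C k := by
    intro j k hjk
    induction hjk with
    | refl => exact Finset.mem_insert_self _ _
    | step _ ih => exact Finset.mem_insert_of_mem ih
  refine ⟨fun k => (next (C k)).1, fun k => (next (C k)).2, fun k => ⟨hnext_mem _, fun l hlk => ?_⟩⟩
  rcases hlk.lt_or_gt with hlk | hkl
  · exact hnext_new _ _ (hC hlk)
  · exact (hnext_avoid _ _ (hC hkl)).2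

theorem exists_private_points [PartialOrder Q] [WellFoundedLT Q] [Infinite ι] {U : ι → Set Q}
    (hU : ∀ i, U i ∈ FinGenInit Q) (hinc : Pairwise fun i j => ¬ U i ⊆ U j) :
    ∃ (σ : ℕ → ι) (ρ : ℕ → Q), ∀ k, ρ k ∈ U (σ k) ∧ ∀ l ≠ k, ρ k ∉ U (σ l) := by
  obtain ⟨n, w, hw⟩ := exists_seq_mem_notMem_of_pairwise_not_subset hU hinc
  -- Restricting to points in only finitely many members makes the family point-finite and keeps
  -- every member nonempty, as `w r` lies in no later member.
  let Q' := {x : Q | {r | x ∈ U (n r)}.Finite}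
  have hQ' : IsUpperSet Q' := fun x y hxy hx =>
    hx.subset fun r hr => isLowerSet_of_mem_finGenInit (hU _) hxy hr
  have hwQ' : ∀ r, w r ∈ Q' := fun r =>
    (finite_Iic r).subset fun s hs => not_lt.1 fun hrs => (hw r).2 s hrs hs
  let V : ℕ → Set Q' := fun r => (↑) ⁻¹' U (n r)
  obtain ⟨R, hR, hcov⟩ := exists_infinite_forall_not_subset_biUnion (U := V)
    (fun r => preimage_val_mem_finGenInit hQ' (hU _)) (fun r => ⟨⟨w r, hwQ' r⟩, (hw r).1⟩)
    (fun x => x.2)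
  have : Infinite R := hR.to_subtype
  obtain ⟨σ, ρ, hρ⟩ := exists_private_points_of_pointFinite (U := fun i : R => V i)
    (fun x => x.2.preimage Subtype.val_injective.injOn) hcov
  exact ⟨fun k => n (σ k), fun k => ρ k, hρ⟩

end PrivatePoints

section SupMap

variable {P Q : Type*} [SemilatticeSup P] {f : P → Set Q}

theorem IndepSet.isAntichain {X : Set P} (hX : IndepSet X) : IsAntichain (· ≤ ·) X :=
  fun x hx y hy hxy hle =>
    hX x hx {y} (Finset.singleton_nonempty y) (by simpa using ⟨hy, hxy.symm⟩) (by simpa using hle)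

theorem subset_iff_le_of_map_sup (hinj : Function.Injective f)
    (hf : ∀ a b, f (a ⊔ b) = f a ∪ f b) {a b : P} : f a ⊆ f b ↔ a ≤ b := by
  rw [← union_eq_right, ← hf, hinj.eq_iff, sup_eq_right]

theorem exists_mem_of_mem_map_finset_sup' (hf : ∀ a b, f (a ⊔ b) = f a ∪ f b) {F : Finset P}
    (hF : F.Nonempty) {q : Q} (hq : q ∈ f (F.sup' hF id)) : ∃ y ∈ F, q ∈ f y :=
  F.sup'_induction hF id (p := fun z => q ∈ f z → ∃ y ∈ F, q ∈ f y)
    (fun a ha b hb h => ((hf a b).subset h).elim ha hb) (fun b hb h => ⟨b, hb, h⟩) hq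

theorem indepSet_of_forall_exists_notMem (hf : ∀ a b, f (a ⊔ b) = f a ∪ f b) {X : Set P}
    (h : ∀ x ∈ X, ∃ q ∈ f x, ∀ y ∈ X, y ≠ x → q ∉ f y) : IndepSet X := by
  intro x hx F hF hFX hle
  obtain ⟨q, hqx, hq⟩ := h x hx
  have hq_sup : q ∈ f (F.sup' hF id) := by
    rw [← sup_eq_right.2 hle, hf]
    exact Or.inl hqx
  obtain ⟨y, hy, hqy⟩ := exists_mem_of_mem_map_finset_sup' hf hF hq_sup
  exact hq y (hFX hy).1 (hFX hy).2 hqy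

theorem wellFoundedLT_of_finGenInit_embedding [PartialOrder Q] [WellFoundedLT Q]
    (hfg : ∀ p, f p ∈ FinGenInit Q) (hinj : Function.Injective f)
    (hf : ∀ a b, f (a ⊔ b) = f a ∪ f b) : WellFoundedLT P := by
  refine ⟨Subrelation.wf (fun {a b} (h : a < b) => ?_)
    (InvImage.wf (fun p => (⟨f p, hfg p⟩ : FinGenInit Q)) wellFoundedOn_finGenInit)⟩
  show f a ⊂ f b
  rw [ssubset_iff_subset_not_subset, subset_iff_le_of_map_sup hinj hf,
    subset_iff_le_of_map_sup hinj hf]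
  exact ⟨h.le, h.not_ge⟩

theorem exists_infinite_indepSet_of_finGenInit_embedding [PartialOrder Q] [WellFoundedLT Q]
    (hfg : ∀ p, f p ∈ FinGenInit Q) (hinj : Function.Injective f)
    (hf : ∀ a b, f (a ⊔ b) = f a ∪ f b) {A : Set P} (hA : IsAntichain (· ≤ ·) A)
    (hA_inf : A.Infinite) : ∃ X : Set P, X.Infinite ∧ IndepSet X := by
  have : Infinite A := hA_inf.to_subtype
  obtain ⟨σ, ρ, hρ⟩ := exists_private_points (U := fun a : A => f a) (fun a => hfg a)
    fun a b hab h => hA a.2 b.2 (Subtype.coe_ne_coe.2 hab) ((subset_iff_le_of_map_sup hinj hf).1 h)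
  have hσ : Function.Injective σ := fun k l h =>
    by_contra fun hkl => (hρ k).2 l (Ne.symm hkl) (h ▸ (hρ k).1)
  refine ⟨range fun k => (σ k : P), infinite_range_of_injective (Subtype.val_injective.comp hσ),
    indepSet_of_forall_exists_notMem hf ?_⟩
  rintro _ ⟨k, rfl⟩
  refine ⟨ρ k, (hρ k).1, ?_⟩
  rintro _ ⟨l, rfl⟩ hlk
  exact (hρ k).2 l fun h => hlk (h ▸ rfl)

end SupMap

section Ideals

open Order

instance LowerSet.wellFoundedLT_of_wellQuasiOrderedLE {P : Type*} [Preorder P]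
    [WellQuasiOrderedLE P] : WellFoundedLT (LowerSet P) := by
  refine ⟨RelEmbedding.wellFounded_iff_isEmpty.2 ⟨fun e => ?_⟩⟩
  have hlt : ∀ n, e (n + 1) < e n := fun n => e.map_rel_iff.2 n.lt_succ_self
  choose x hx hx' using fun n => exists_of_ssubset (LowerSet.coe_ssubset_coe.2 (hlt n))
  obtain ⟨m, n, hmn, hle⟩ := wellQuasiOrdered_le x
  have hanti : Antitone e := antitone_nat_of_succ_le fun n => (hlt n).le
  exact hx' m ((e (m + 1)).lower hle (hanti hmn (hx n)))

theorem LowerSet.exists_finset_ideal_eq_biUnion {P : Type*} [Preorder P]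
    [WellFoundedLT (LowerSet P)] (D : LowerSet P) :
    ∃ T : Finset (Ideal P), (D : Set P) = ⋃ I ∈ T, (I : Set P) := by
  classical
  induction D using WellFoundedLT.induction with
  | _ D ih =>
  rcases (D : Set P).eq_empty_or_nonempty with hD | hD
  · exact ⟨∅, by simpa using hD⟩
  by_cases hdir : DirectedOn (· ≤ ·) (D : Set P)
  · exact ⟨{⟨D, hD, hdir⟩}, by simp; rfl⟩
  obtain ⟨a, ha, b, hb, hab⟩ : ∃ a ∈ D, ∃ b ∈ D, ∀ c ∈ D, ¬ (a ≤ c ∧ b ≤ c) := by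
    simpa [DirectedOn] using hdir
  have hlt : ∀ c ∈ D, D ⊓ (UpperSet.Ici c).compl < D := fun c hc =>
    inf_le_left.lt_of_not_ge fun h => (h hc).2 le_rfl
  obtain ⟨Ta, hTa⟩ := ih _ (hlt a ha)
  obtain ⟨Tb, hTb⟩ := ih _ (hlt b hb)
  refine ⟨Ta ∪ Tb, ?_⟩
  rw [Finset.set_biUnion_union, ← hTa, ← hTb]
  ext x
  simp only [SetLike.mem_coe, coe_inf, UpperSet.coe_compl, UpperSet.coe_Ici, mem_union,
    mem_inter_iff, Set.mem_compl_iff, mem_Ici]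
  have := hab x
  tauto

theorem Order.Ideal.exists_le_of_subset_biUnion {P : Type*} [SemilatticeSup P] (I : Ideal P)
    {T : Finset (Ideal P)} (h : (I : Set P) ⊆ ⋃ J ∈ T, (J : Set P)) : ∃ J ∈ T, I ≤ J := by
  by_contra! hT
  obtain ⟨y, hy⟩ := I.nonempty
  have : Nonempty P := ⟨y⟩
  choose! x hxI hxJ using fun J (hJ : J ∈ T) => not_subset.1 (hT J hJ)
  rcases T.eq_empty_or_nonempty with rfl | hne
  · simpa using h hy
  · have hz : T.sup' hne x ∈ I := Finset.sup'_mem _ (fun a ha b hb => I.sup_mem ha hb) _ _ _ hxI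
    obtain ⟨J, hJ, hzJ⟩ := mem_iUnion₂.1 (h hz)
    exact hxJ J hJ (J.lower (Finset.le_sup' x hJ) hzJ)

variable {P : Type*} [SemilatticeSup P]

theorem setOf_notMem_ideal_mem_finGenInit [WellQuasiOrderedLE P] (p : P) :
    {I : Ideal P | p ∉ I} ∈ FinGenInit (Ideal P) := by
  obtain ⟨T, hT⟩ := (UpperSet.Ici p).compl.exists_finset_ideal_eq_biUnion
  refine ⟨T, Set.ext fun I => ⟨fun hpI => ?_, ?_⟩⟩
  · exact I.exists_le_of_subset_biUnion (hT ▸ fun x hx hpx => hpI (I.lower hpx hx))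
  · rintro ⟨J, hJ, hIJ⟩ hpI
    have hp : p ∈ ⋃ J ∈ T, (J : Set P) := mem_iUnion₂.2 ⟨J, hJ, hIJ hpI⟩
    rw [← hT] at hp
    exact hp le_rfl

theorem setOf_notMem_ideal_injective : Function.Injective fun p : P => {I : Ideal P | p ∉ I} := by
  have key : ∀ {a b : P}, {I : Ideal P | a ∉ I} = {I | b ∉ I} → a ≤ b := fun {a b} h => by
    by_contra hab
    have hb : Ideal.principal b ∈ {I : Ideal P | a ∉ I} := fun ha => hab (Ideal.mem_principal.1 ha)
    exact (h ▸ hb) Ideal.mem_principal_self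
  exact fun p q h => le_antisymm (key h) (key h.symm)

theorem setOf_notMem_ideal_sup (a b : P) :
    {I : Ideal P | a ⊔ b ∉ I} = {I | a ∉ I} ∪ {I | b ∉ I} := by
  ext I
  simp only [mem_ofPred_eq, mem_union, Ideal.sup_mem_iff, not_and_or]

instance Order.Ideal.wellFoundedLT [WellFoundedLT (LowerSet P)] : WellFoundedLT (Ideal P) :=
  StrictMono.wellFoundedLT (f := Ideal.toLowerSet) fun _ _ h => h

end Ideals

/-- A join-semilattice `P` is wqo (well-founded with no infinite antichain) iff
`P` has no infinite independent subset and `P` embeds as a join-subsemilattice into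
`I_{<ω}(Q)` for some well-founded poset `Q`. -/
theorem wqo_iff_no_indep_and_embeds {P : Type u} [SemilatticeSup P] :
    (WellFounded ((· < ·) : P → P → Prop) ∧
        ∀ A : Set P, IsAntichain (· ≤ ·) A → A.Finite) ↔
      ((¬ ∃ X : Set P, X.Infinite ∧ IndepSet X) ∧
        ∃ (Q : Type u) (_ : PartialOrder Q), WellFounded ((· < ·) : Q → Q → Prop) ∧
          ∃ f : P → Set Q, (∀ p, f p ∈ FinGenInit Q) ∧ Function.Injective f ∧
            ∀ a b, f (a ⊔ b) = f a ∪ f b) := by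
  constructor
  · rintro ⟨hwf, hanti⟩
    have : WellQuasiOrderedLE P := wellQuasiOrderedLE_iff.2 ⟨⟨hwf⟩, hanti⟩
    exact ⟨fun ⟨X, hX, hind⟩ => hX (hanti X hind.isAntichain), Order.Ideal P, inferInstance,
      wellFounded_lt, fun p => {I | p ∉ I}, setOf_notMem_ideal_mem_finGenInit,
      setOf_notMem_ideal_injective, setOf_notMem_ideal_sup⟩
  · rintro ⟨hind, Q, _, hwfQ, f, hfg, hinj, hf⟩
    have : WellFoundedLT Q := ⟨hwfQ⟩
    exact ⟨(wellFoundedLT_of_finGenInit_embedding hfg hinj hf).wf, fun A hA =>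
      not_infinite.1 fun hA_inf =>
        hind (exists_infinite_indepSet_of_finGenInit_embedding hfg hinj hf hA hA_inf)⟩
end

section
/- Let P be a set of finite subsets of ℕ closed under binary union (a join-subsemilattice of [ω]^{<ω}). Then either [ω]^{<ω} embeds into P as a join-subsemilattice, or P ordered by inclusion is wqo. -/
open Set

/-!
Finite sets are well-founded under inclusion, so only the antichain condition can fail. Given an
infinite antichain, compactness of the Cantor space `2^ℕ` yields a subsequence converging pointwise
to some `L ⊆ ℕ`. No member is contained in `L` (it would then lie in almost every later member),
and a point outside `L` lies in only finitely many members, so a further subsequence `b i` has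
private points `t i ∈ b i \ ⋃_{j ≠ i} b j`. Then `S ↦ b 0 ∪ ⋃_{i ∈ S} b (i + 1)` is an injective
union-preserving map into `P`; the summand `b 0` keeps the image of `∅` in `P`.
-/

open Filter

theorem exists_strictMono_eventually_mem_iff {α : Type*} [Countable α] (s : ℕ → Set α) :
    ∃ L : Set α, ∃ φ : ℕ → ℕ, StrictMono φ ∧ ∀ k, ∀ᶠ n in atTop, (k ∈ s (φ n) ↔ k ∈ L) := by
  classical
  obtain ⟨χ, φ, hφ, hχ⟩ := CompactSpace.tendsto_subseq fun n k => decide (k ∈ s n)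
  refine ⟨{k | χ k}, φ, hφ, fun k => ?_⟩
  have hk := tendsto_pi_nhds.mp hχ k
  rw [nhds_discrete, tendsto_pure] at hk
  exact hk.mono fun n hn => by simp [← hn]

theorem exists_strictMono_privatePoints {α : Type*} {s : ℕ → Finset α} {L : Set α}
    (hs : ∀ i j, i ≠ j → ¬ s i ⊆ s j) (hL : ∀ k, ∀ᶠ n in atTop, (k ∈ s n ↔ k ∈ L)) :
    ∃ φ : ℕ → ℕ, ∃ t : ℕ → α, StrictMono φ ∧ ∀ i j, t i ∈ s (φ j) ↔ i = j := by
  have hout : ∀ n, ∃ k ∈ s n, k ∉ L := by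
    intro n
    by_contra! hsub
    have hev : ∀ᶠ m in atTop, m ≠ n ∧ ∀ k ∈ s n, k ∈ s m :=
      (eventually_ne_atTop n).and <| (eventually_all_finset _).2 fun k hk =>
        (hL k).mono fun m hm => hm.2 (hsub k hk)
    obtain ⟨m, hmn, hm⟩ := hev.exists
    exact hs n m hmn.symm hm
  have hleave : ∀ m, ∀ᶠ n in atTop, ∀ k ∈ s m, k ∉ L → k ∉ s n := fun m =>
    (eventually_all_finset _).2 fun k _ => (hL k).mono fun _ hn hkL hk => hkL (hn.1 hk)
  choose t ht htL using hout
  obtain ⟨φ, hφ, hφrel, -⟩ := hasAntitoneBasis_atTop.subbasis_with_rel hleave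
  refine ⟨φ, fun i => t (φ i), hφ, fun i j => ⟨fun hij => ?_, fun hij => hij ▸ ht _⟩⟩
  rcases lt_trichotomy i j with hlt | heq | hgt
  · exact absurd hij (hφrel hlt _ (ht _) (htL _))
  · exact heq
  · exact absurd (ht _) (hφrel hgt _ hij (htL _))

theorem IsAntichain.exists_seq_privatePoints {α : Type*} [Countable α] {A : Set (Finset α)}
    (hA : IsAntichain (· ≤ ·) A) (hinf : A.Infinite) :
    ∃ b : ℕ → Finset α, ∃ t : ℕ → α, (∀ i, b i ∈ A) ∧ ∀ i j, t i ∈ b j ↔ i = j := by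
  set e := hinf.natEmbedding A
  obtain ⟨L, φ, hφ, hL⟩ := exists_strictMono_eventually_mem_iff fun n => ((e n : Finset α) : Set α)
  have hs : ∀ i j, i ≠ j → ¬ (e (φ i) : Finset α) ⊆ e (φ j) := fun i j hij =>
    hA (e (φ i)).2 (e (φ j)).2 (fun h => hij (hφ.injective (e.injective (Subtype.ext h))))
  obtain ⟨ψ, t, -, ht⟩ := exists_strictMono_privatePoints hs hL
  exact ⟨fun i => e (φ (ψ i)), t, fun i => (e _).2, ht⟩

theorem Finset.mem_sup_iff_of_privatePoints {ι α : Type*} [DecidableEq α] {b : ι → Finset α}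
    {t : ι → α} (ht : ∀ i j, t i ∈ b j ↔ i = j) (U : Finset ι) (i : ι) :
    t i ∈ U.sup b ↔ i ∈ U := by
  simp [Finset.mem_sup, ht]

theorem exists_injective_union_hom_of_privatePoints {α : Type*} [DecidableEq α]
    {P : Set (Finset α)} (hP : SupClosed P) {b : ℕ → Finset α} {t : ℕ → α} (hb : ∀ i, b i ∈ P)
    (ht : ∀ i j, t i ∈ b j ↔ i = j) :
    ∃ f : Finset ℕ → Finset α, (∀ a, f a ∈ P) ∧ Function.Injective f ∧
      ∀ a c, f (a ∪ c) = f a ∪ f c := by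
  refine ⟨fun S => (insert 0 (S.image (· + 1))).sup b,
    fun S => hP.finsetSup_mem (Finset.insert_nonempty _ _) fun i _ => hb i, fun S T hST => ?_,
    fun S T => ?_⟩
  · ext i
    have hi := congrArg (t (i + 1) ∈ ·) hST
    simp only [Finset.mem_sup_iff_of_privatePoints ht] at hi
    simpa using hi
  · dsimp only
    rw [Finset.image_union, Finset.insert_union_distrib, Finset.sup_union]
    rfl

/-- A join-subsemilattice `P` of `[ω]^{<ω}` either contains a copy of `[ω]^{<ω}`
as a join-subsemilattice, or is wqo. -/
theorem finset_subsemilattice_dichotomy (P : Set (Finset ℕ))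
    (hP : ∀ a ∈ P, ∀ b ∈ P, a ∪ b ∈ P) :
    (∃ f : Finset ℕ → Finset ℕ, (∀ a, f a ∈ P) ∧ Function.Injective f ∧
        ∀ a b, f (a ∪ b) = f a ∪ f b) ∨
      (WellFounded (fun a b : {x : Finset ℕ // x ∈ P} => a < b) ∧
        ∀ A : Set (Finset ℕ), A ⊆ P → IsAntichain (· ≤ ·) A → A.Finite) := by
  by_cases hwqo : ∀ A : Set (Finset ℕ), A ⊆ P → IsAntichain (· ≤ ·) A → A.Finite
  · exact Or.inr ⟨wellFounded_lt, hwqo⟩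
  push Not at hwqo
  obtain ⟨A, hAP, hA, hinf⟩ := hwqo
  obtain ⟨b, t, hbA, ht⟩ := hA.exists_seq_privatePoints hinf
  exact Or.inl <| exists_injective_union_hom_of_privatePoints (fun a ha c hc => hP a ha c hc)
    (fun i => hAP (hbA i)) ht
end

section
/- Let P be a join-semilattice. The following are equivalent: (a) either there is a strictly decreasing infinite sequence in P, or Ω(ω*) embeds into P as a join-subsemilattice; (b) there is a strictly decreasing sequence I₀ ⊋ I₁ ⊋ I₂ ⊋ ⋯ of ideals of P such that for every infinite set A ⊆ ℕ the chain {Iₙ : n ∈ A} is non-separating. -/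
open Set

/-! For the forward direction take the principal ideals `↓g n`, respectively the ideals generated
by the pairs `(i, j)` with `i ≥ n`: for `a < m` some `x ∈ I a \ I m` has `I m ⊆ {x} ∨ I k` for
every `k`, so no infinite subchain separates.

Conversely, non-separation of every tail yields indices `p 0 < p 1 < ⋯` and points
`x n ∈ I (p n) \ I (p (n+1))` with `I (p (i+1)) ⊆ {x i} ∨ I (p k)` for all `i < k`. If every
ideal of the chain contains an upper bound `u` of a later ideal with `u` missing from a still
later one, these bounds form a strictly decreasing sequence. Otherwise some `I (p 0)` has no such
bound, and one builds `c 0, c 1, …` with `c n ∈ I (p n)` above `x n`, above witnesses of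
`c k ≤ x i ⊔ _` for `i < k < n`, and above witnesses of `¬ _ ≤ c i ⊔ c j` for `i ≤ j < n`
(these exist because `c i ⊔ c j` would otherwise be such a bound). Then
`c k ≤ c i ⊔ c j ↔ i ≤ k ≤ j`, and `(i, j) ↦ c i ⊔ c (j - 1)` embeds `Ω(ω*)`. -/

open Function

theorem Nat.exists_seq_of_forall_exists_next {α : Type*} [Nonempty α]
    (Q : ℕ → (ℕ → α) → α → Prop)
    (hQ : ∀ n c c' a, (∀ k < n, c k = c' k) → Q n c a → Q n c' a)
    (h : ∀ n c, (∀ k < n, Q k c (c k)) → ∃ a, Q n c a) :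
    ∃ c : ℕ → α, ∀ n, Q n c (c n) := by
  classical
  let restrict (n : ℕ) (c : ℕ → α) : ℕ → α :=
    fun k => if k < n then c k else Classical.arbitrary α
  let next (n : ℕ) (c : ℕ → α) : α :=
    if hc : ∃ a, Q n c a then hc.choose else Classical.arbitrary α
  let c : ℕ → α := Nat.strongRec fun n prev =>
    next n fun k => if hk : k < n then prev k hk else Classical.arbitrary α
  have hc : ∀ n, c n = next n (restrict n c) := fun n => by
    simp only [c]
    rw [Nat.strongRec_eq]
    simp only [restrict, dite_eq_ite]
  refine ⟨c, fun n => Nat.strong_induction_on n fun n ih => ?_⟩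
  have hagree : ∀ k < n, c k = restrict n c k := fun k hk => (if_pos hk).symm
  have hex : ∃ a, Q n (restrict n c) a := h n _ fun k hk => by
    rw [← hagree k hk]
    exact hQ k c _ _ (fun j hj => hagree j (hj.trans hk)) (ih k hk)
  rw [hc n]
  simp only [next, dif_pos hex]
  exact hQ n _ c _ (fun k hk => (hagree k hk).symm) hex.choose_spec

section Ideals

variable {P : Type*}

theorem isIdeal_Iic [Preorder P] (a : P) : IsIdeal (Iic a) :=
  ⟨⟨a, le_rfl⟩, fun _ hx _ hy => ⟨a, le_rfl, hx, hy⟩, fun _ _ hxy hy => hxy.trans hy⟩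

theorem isIdeal_lowerClosure [Preorder P] {S : Set P} (hne : S.Nonempty)
    (hS : DirectedOn (· ≤ ·) S) : IsIdeal (lowerClosure S : Set P) := by
  refine ⟨hne.mono subset_lowerClosure, ?_, fun x y hxy hy => ?_⟩
  · rintro x ⟨a, ha, hxa⟩ y ⟨b, hb, hyb⟩
    obtain ⟨z, hz, haz, hbz⟩ := hS a ha b hb
    exact ⟨z, subset_lowerClosure hz, hxa.trans haz, hyb.trans hbz⟩
  · obtain ⟨a, ha, hya⟩ := hy
    exact ⟨a, ha, hxy.trans hya⟩

theorem IsIdeal.sup_mem_s8 [SemilatticeSup P] {I : Set P} (hI : IsIdeal I) {a b : P}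
    (ha : a ∈ I) (hb : b ∈ I) : a ⊔ b ∈ I := by
  obtain ⟨z, hz, haz, hbz⟩ := hI.2.1 a ha b hb
  exact hI.2.2 _ z (sup_le haz hbz) hz

theorem IsIdeal.exists_mem_forall_of_finset [Preorder P] {I : Set P} (hI : IsIdeal I)
    {ι : Type*} {R : ι → P → Prop} (hR : ∀ t a b, a ≤ b → R t a → R t b) (s : Finset ι)
    (h : ∀ t ∈ s, ∃ y ∈ I, R t y) : ∃ z ∈ I, ∀ t ∈ s, R t z := by
  classical
  induction s using Finset.induction_on with
  | empty => exact hI.1.imp fun z hz => ⟨hz, by simp⟩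
  | insert t s _ ih =>
    obtain ⟨z, hz, hzs⟩ := ih fun u hu => h u (Finset.mem_insert_of_mem hu)
    obtain ⟨y, hy, hyt⟩ := h t (Finset.mem_insert_self t s)
    obtain ⟨w, hw, hzw, hyw⟩ := hI.2.1 z hz y hy
    refine ⟨w, hw, fun u hu => ?_⟩
    rcases Finset.mem_insert.1 hu with rfl | hu
    · exact hR _ _ _ hyw hyt
    · exact hR _ _ _ hzw (hzs u hu)

end Ideals

theorem exists_strictAnti_of_forall_exists_bound {P : Type*} [PartialOrder P] {I : ℕ → Set P}
    (hI : Antitone I) (h : ∀ r, ∃ u ∈ I r, ∃ l, I l ⊆ Iic u ∧ ∃ t, u ∉ I t) :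
    ∃ g : ℕ → P, StrictAnti g := by
  choose u hu l hl t ht using h
  let R (n : ℕ) : ℕ := (fun r => max (l r) (t r))^[n] 0
  refine ⟨fun n => u (R n), strictAnti_nat_of_succ_lt fun n => ?_⟩
  have hR : R (n + 1) = max (l (R n)) (t (R n)) := iterate_succ_apply' _ _ _
  have hl' : u (R (n + 1)) ∈ I (l (R n)) := hI (hR ▸ le_max_left _ _) (hu _)
  have ht' : u (R (n + 1)) ∈ I (t (R n)) := hI (hR ▸ le_max_right _ _) (hu _)
  exact lt_of_le_of_ne (hl _ hl') fun heq => ht _ (heq ▸ ht')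

section OmegaStar

variable {P : Type*} [SemilatticeSup P]

theorem omegaJoin_eq_right_iff {a b : OmegaStar} :
    omegaJoin a b = b ↔ b.1.1 ≤ a.1.1 ∧ a.1.2 ≤ b.1.2 := by
  simp only [omegaJoin, Subtype.ext_iff, Prod.ext_iff, min_eq_right_iff, max_eq_right_iff]

theorem le_iff_of_map_omegaJoin {f : OmegaStar → P} (hf : Injective f)
    (hjoin : ∀ a b, f (omegaJoin a b) = f a ⊔ f b) {a b : OmegaStar} :
    f a ≤ f b ↔ b.1.1 ≤ a.1.1 ∧ a.1.2 ≤ b.1.2 := by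
  rw [← omegaJoin_eq_right_iff, ← hf.eq_iff, hjoin, sup_eq_right]

theorem exists_omegaStar_embedding_of_le_sup_iff {c : ℕ → P}
    (hc : ∀ i j k, i ≤ j → (c k ≤ c i ⊔ c j ↔ i ≤ k ∧ k ≤ j)) :
    ∃ f : OmegaStar → P, Injective f ∧ ∀ a b, f (omegaJoin a b) = f a ⊔ f b := by
  have hle : ∀ {i j i' j'}, i ≤ j → i' ≤ j' →
      (c i ⊔ c j ≤ c i' ⊔ c j' ↔ i' ≤ i ∧ j ≤ j') := by
    intro i j i' j' hij hij'
    rw [sup_le_iff, hc _ _ _ hij', hc _ _ _ hij']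
    omega
  refine ⟨fun a => c a.1.1 ⊔ c (a.1.2 - 1), fun a b hab => ?_, fun a b => ?_⟩
  · have ha := a.2
    have hb := b.2
    have h₁ := (hle (by omega) (by omega)).1 hab.le
    have h₂ := (hle (by omega) (by omega)).1 hab.ge
    exact Subtype.ext (Prod.ext (by omega) (by omega))
  · have ha := a.2
    have hb := b.2
    show c (min a.1.1 b.1.1) ⊔ c (max a.1.2 b.1.2 - 1) = _
    refine le_antisymm (sup_le ?_ ?_) (sup_le ((hle ?_ ?_).2 ?_) ((hle ?_ ?_).2 ?_))
    · rcases min_choice a.1.1 b.1.1 with h | h <;> rw [h]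
      exacts [le_sup_left.trans le_sup_left, le_sup_left.trans le_sup_right]
    · rcases max_choice a.1.2 b.1.2 with h | h <;> rw [h]
      exacts [le_sup_right.trans le_sup_left, le_sup_right.trans le_sup_right]
    all_goals omega

end OmegaStar

section Separating

variable {P : Type*} [SemilatticeSup P]

theorem not_separating_image_of_forall_lt {I : ℕ → Set P} {A : Set ℕ} (hA : A.Infinite)
    (h : ∀ a m, a < m → ∃ x ∈ I a, x ∉ I m ∧ ∀ k, I m ⊆ JoinUp x (I k)) :
    ¬ Separating (I '' A) := by
  intro hsep
  obtain ⟨a, ha⟩ := hA.nonempty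
  obtain ⟨m, hm, ham⟩ := hA.exists_gt a
  obtain ⟨x, hxa, hxm, hx⟩ := h a m ham
  have hxU : x ∈ ⋃₀ (I '' A) := ⟨I a, mem_image_of_mem I ha, hxa⟩
  obtain ⟨_, ⟨k, -, rfl⟩, hk⟩ :=
    hsep (I m) (mem_image_of_mem I hm) (fun h => hxm (h ▸ hxU)) x ⟨hxU, hxm⟩
  exact hk (hx k)

theorem exists_nonseparating_of_strictAnti {g : ℕ → P} (hg : StrictAnti g) :
    ∃ I : ℕ → Set P, (∀ n, IsIdeal (I n)) ∧ (∀ n, I (n + 1) ⊂ I n) ∧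
      ∀ A : Set ℕ, A.Infinite → ¬ Separating (I '' A) :=
  ⟨fun n => Iic (g n), fun _ => isIdeal_Iic _, fun n => Iic_ssubset_Iic.2 (hg n.lt_succ_self),
    fun _ hA => not_separating_image_of_forall_lt hA fun a _ ham =>
      ⟨g a, le_rfl, (hg ham).not_ge,
        fun k _ hz => ⟨g k, le_rfl, hz.trans ((hg ham).le.trans le_sup_left)⟩⟩⟩

theorem exists_nonseparating_of_omegaStar_embedding {f : OmegaStar → P} (hf : Injective f)
    (hjoin : ∀ a b, f (omegaJoin a b) = f a ⊔ f b) :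
    ∃ I : ℕ → Set P, (∀ n, IsIdeal (I n)) ∧ (∀ n, I (n + 1) ⊂ I n) ∧
      ∀ A : Set ℕ, A.Infinite → ¬ Separating (I '' A) := by
  let pt (i : ℕ) : OmegaStar := ⟨(i, i + 1), i.lt_succ_self⟩
  let I (n : ℕ) : Set P := lowerClosure (f '' {a | n ≤ a.1.1})
  have hpt : ∀ n, f (pt n) ∈ I n := fun n => subset_lowerClosure ⟨pt n, le_refl n, rfl⟩
  have hpt' : ∀ a m, a < m → f (pt a) ∉ I m := by
    rintro a m ham ⟨_, ⟨b, hb, rfl⟩, hab⟩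
    have := ((le_iff_of_map_omegaJoin hf hjoin).1 hab).1
    simp only [mem_ofPred_eq, pt] at hb this
    omega
  refine ⟨I, fun n => isIdeal_lowerClosure ⟨f (pt n), pt n, le_refl n, rfl⟩ ?_, fun n => ?_,
    fun A hA => ?_⟩
  · rintro _ ⟨a, ha, rfl⟩ _ ⟨b, hb, rfl⟩
    exact ⟨f (omegaJoin a b), ⟨_, show n ≤ min _ _ from le_min ha hb, rfl⟩,
      hjoin a b ▸ le_sup_left, hjoin a b ▸ le_sup_right⟩
  · have hsub : I (n + 1) ⊆ I n :=
      lowerClosure_mono (image_mono fun a ha => n.le_succ.trans ha)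
    exact (ssubset_iff_of_subset hsub).2 ⟨_, hpt n, hpt' n (n + 1) n.lt_succ_self⟩
  · refine not_separating_image_of_forall_lt hA fun a m ham => ⟨_, hpt a, hpt' a m ham, ?_⟩
    rintro k z ⟨_, ⟨b, hb, rfl⟩, hzb⟩
    have hb2 := b.2
    refine ⟨f ⟨(k, max b.1.2 (k + 1)), by omega⟩, subset_lowerClosure ⟨_, le_refl k, rfl⟩,
      hzb.trans ?_⟩
    rw [← hjoin, le_iff_of_map_omegaJoin hf hjoin]
    simp only [mem_ofPred_eq] at hb
    simp only [omegaJoin, pt]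
    omega

theorem exists_joinUp_of_not_separating_Ioi {I : ℕ → Set P} (hI : Antitone I) {s : ℕ}
    (h : ¬ Separating (I '' Ioi s)) :
    ∃ m, s < m ∧ ∃ x ∈ I (s + 1), x ∉ I m ∧ ∀ k, s < k → I m ⊆ JoinUp x (I k) := by
  simp only [Separating, not_forall, not_exists, not_and, not_not, exists_prop] at h
  obtain ⟨_, ⟨m, hm, rfl⟩, -, x, ⟨⟨_, ⟨k, hk, rfl⟩, hxk⟩, hxm⟩, hx⟩ := h
  exact ⟨m, hm, x, hI hk hxk, hxm, fun k hk => hx _ (mem_image_of_mem I hk)⟩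

theorem exists_subseq_joinUp {I : ℕ → Set P} (hI : Antitone I)
    (h : ∀ s, ¬ Separating (I '' Ioi s)) (r : ℕ) :
    ∃ p : ℕ → ℕ, p 0 = r ∧ StrictMono p ∧ ∃ x : ℕ → P, ∀ n, x n ∈ I (p n) ∧
      x n ∉ I (p (n + 1)) ∧ ∀ k, n < k → I (p (n + 1)) ⊆ JoinUp (x n) (I (p k)) := by
  choose M hM y hy hyM hyJ using fun s => exists_joinUp_of_not_separating_Ioi hI (h s)
  have hp : ∀ n, M^[n + 1] r = M (M^[n] r) := fun n => iterate_succ_apply' M n r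
  have hmono : StrictMono fun n => M^[n] r :=
    strictMono_nat_of_lt_succ fun n => by rw [hp]; exact hM _
  refine ⟨fun n => M^[n] r, rfl, hmono, fun n => y (M^[n] r), fun n =>
    ⟨hI (M^[n] r).le_succ (hy _), ?_, fun k hk => ?_⟩⟩
  · simp only [hp, hyM, not_false_eq_true]
  · simp only [hp]
    exact hyJ _ _ (hmono hk)

end Separating

section Construction

variable {P : Type*} [SemilatticeSup P] {J : ℕ → Set P} {x : ℕ → P}

theorem exists_next_of_joinUp (hJ : ∀ n, IsIdeal (J n)) (hanti : Antitone J)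
    (hx_mem : ∀ n, x n ∈ J n) (hx_succ : ∀ n, x n ∉ J (n + 1))
    (hjoin : ∀ i k, i < k → J (i + 1) ⊆ JoinUp (x i) (J k))
    (hbound : ∀ u ∈ J 0, ∀ l, J l ⊆ Iic u → ∀ t, u ∈ J t)
    (n : ℕ) (c : ℕ → P) (hc : ∀ k < n, c k ∈ J k ∧ x k ≤ c k) :
    ∃ a ∈ J n, x n ≤ a ∧ (∀ i k, i < k → k < n → c k ≤ x i ⊔ a) ∧
      ∀ i j, i ≤ j → j < n → ¬ a ≤ c i ⊔ c j := by
  let pairs := Finset.range n ×ˢ Finset.range n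
  have hY : ∀ t ∈ pairs, ∃ y ∈ J n, t.1 < t.2 → c t.2 ≤ x t.1 ⊔ y := by
    rintro ⟨i, k⟩ hik
    simp only [pairs, Finset.mem_product, Finset.mem_range] at hik
    by_cases hlt : i < k
    · obtain ⟨y, hy, hle⟩ := hjoin i n (by omega) (hanti hlt (hc k hik.2).1)
      exact ⟨y, hy, fun _ => hle⟩
    · obtain ⟨y, hy⟩ := (hJ n).1
      exact ⟨y, hy, fun h => absurd h hlt⟩
  have hG : ∀ t ∈ pairs, ∃ g ∈ J n, t.1 ≤ t.2 → ¬ g ≤ c t.1 ⊔ c t.2 := by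
    rintro ⟨i, j⟩ hij
    simp only [pairs, Finset.mem_product, Finset.mem_range] at hij
    by_contra! hbdd
    have hmem : c i ⊔ c j ∈ J 0 := (hJ 0).sup_mem_s8
      (hanti (Nat.zero_le _) (hc i hij.1).1) (hanti (Nat.zero_le _) (hc j hij.2).1)
    exact hx_succ i ((hJ _).2.2 _ _ ((hc i hij.1).2.trans le_sup_left)
      (hbound _ hmem n (fun z hz => (hbdd z hz).2) (i + 1)))
  obtain ⟨y, hy, hyc⟩ := (hJ n).exists_mem_forall_of_finset
    (fun _ _ _ hab h hlt => (h hlt).trans (sup_le_sup_left hab _)) pairs hY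
  obtain ⟨g, hg, hgc⟩ := (hJ n).exists_mem_forall_of_finset
    (fun _ _ _ hab h hle hb => h hle (hab.trans hb)) pairs hG
  refine ⟨x n ⊔ y ⊔ g, (hJ n).sup_mem_s8 ((hJ n).sup_mem_s8 (hx_mem n) hy) hg,
    le_sup_left.trans le_sup_left, fun i k hik hkn => ?_, fun i j hij hjn hle => ?_⟩
  · exact (hyc (i, k) (by simp [pairs]; omega) hik).trans
      (sup_le_sup_left (le_sup_right.trans le_sup_left) _)
  · exact hgc (i, j) (by simp [pairs]; omega) hij (le_sup_right.trans hle)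

theorem exists_seq_le_sup_iff_of_joinUp (hJ : ∀ n, IsIdeal (J n)) (hanti : Antitone J)
    (hx_mem : ∀ n, x n ∈ J n) (hx_succ : ∀ n, x n ∉ J (n + 1))
    (hjoin : ∀ i k, i < k → J (i + 1) ⊆ JoinUp (x i) (J k))
    (hbound : ∀ u ∈ J 0, ∀ l, J l ⊆ Iic u → ∀ t, u ∈ J t) :
    ∃ c : ℕ → P, ∀ i j k, i ≤ j → (c k ≤ c i ⊔ c j ↔ i ≤ k ∧ k ≤ j) := by
  have : Nonempty P := ⟨x 0⟩
  obtain ⟨c, hc⟩ := Nat.exists_seq_of_forall_exists_next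
    (fun n c a => a ∈ J n ∧ x n ≤ a ∧ (∀ i k, i < k → k < n → c k ≤ x i ⊔ a) ∧
      ∀ i j, i ≤ j → j < n → ¬ a ≤ c i ⊔ c j)
    (fun n c c' a hcc' ⟨hmem, hx, hY, hG⟩ => ⟨hmem, hx,
      fun i k hik hkn => hcc' k hkn ▸ hY i k hik hkn,
      fun i j hij hjn => hcc' i (hij.trans_lt hjn) ▸ hcc' j hjn ▸ hG i j hij hjn⟩)
    (fun n c hc => exists_next_of_joinUp hJ hanti hx_mem hx_succ hjoin hbound n c
      fun k hk => ⟨(hc k hk).1, (hc k hk).2.1⟩)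
  refine ⟨c, fun i j k hij => ⟨fun hle => ?_, fun ⟨hik, hkj⟩ => ?_⟩⟩
  · by_contra hout
    rcases Nat.lt_or_ge k i with hki | hik
    · have hmem : c i ⊔ c j ∈ J (k + 1) :=
        (hJ _).sup_mem_s8 (hanti hki (hc i).1) (hanti (hki.trans_le hij) (hc j).1)
      exact hx_succ k ((hJ _).2.2 _ _ ((hc k).2.1.trans hle) hmem)
    · exact (hc k).2.2.2 i j hij (by omega) hle
  · rcases hik.eq_or_lt with rfl | hik
    · exact le_sup_left
    rcases hkj.eq_or_lt with rfl | hkj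
    · exact le_sup_right
    exact ((hc j).2.2.1 i k hik hkj).trans (sup_le_sup_right (hc i).2.1 _)

end Construction

/-- A join-semilattice `P` contains a strictly decreasing infinite sequence or a
copy of `Ω(ω*)` as a join-subsemilattice iff there is a strictly decreasing `ω*`-sequence of
ideals of `P` all of whose infinite subchains are non-separating. -/
theorem omegaStar_or_Omega_iff_nonseparating_chain {P : Type*} [SemilatticeSup P] :
    ((∃ g : ℕ → P, StrictAnti g) ∨
        ∃ f : OmegaStar → P, Function.Injective f ∧
          ∀ a b, f (omegaJoin a b) = f a ⊔ f b) ↔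
      ∃ I : ℕ → Set P, (∀ n, IsIdeal (I n)) ∧ (∀ n, I (n + 1) ⊂ I n) ∧
        ∀ A : Set ℕ, A.Infinite → ¬ Separating (I '' A) := by
  constructor
  · rintro (⟨g, hg⟩ | ⟨f, hf, hjoin⟩)
    exacts [exists_nonseparating_of_strictAnti hg,
      exists_nonseparating_of_omegaStar_embedding hf hjoin]
  · rintro ⟨I, hI, hdec, hns⟩
    have hanti : Antitone I := antitone_nat_of_succ_le fun n => (hdec n).subset
    by_cases hbounds : ∀ r, ∃ u ∈ I r, ∃ l, I l ⊆ Iic u ∧ ∃ t, u ∉ I t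
    · exact Or.inl (exists_strictAnti_of_forall_exists_bound hanti hbounds)
    push Not at hbounds
    obtain ⟨r, hr⟩ := hbounds
    obtain ⟨p, rfl, hp, x, hx⟩ :=
      exists_subseq_joinUp hanti (fun s => hns _ (Ioi_infinite s)) r
    obtain ⟨c, hc⟩ := exists_seq_le_sup_iff_of_joinUp (J := I ∘ p) (fun _ => hI _)
      (hanti.comp_monotone hp.monotone) (fun n => (hx n).1) (fun n => (hx n).2.1)
      (fun i k hik => (hx i).2.2 k hik) (fun u hu l hl t => hr u hu (p l) hl (p t))
    exact Or.inr (exists_omegaStar_embedding_of_le_sup_iff hc)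
end
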